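/- arXiv:1706.01337 — 12 statements merged into one kernel-verified Lean document; each statement's English description precedes it below -/
import Mathlib

section
/- Let n, m ∈ ℕ, let A ∈ ℝ^{n×n}, B ∈ ℝ^{n×m}, C ∈ ℝ^{m×n}, D ∈ ℝ^{m×m}, let P ∈ ℝ^{n×n} be symmetric positive definite, let λ ≥ 0 and ε > 0. Suppose the (n+m)×(n+m) symmetric matrix [A B; I 0]ᵀ·[P 0; 0 −P]·[A B; I 0] + λ·[0 Cᵀ; C D+Dᵀ] + ε·[P 0; 0 0] is negative semidefinite. Then for every x ∈ ℝⁿ and u ∈ ℝᵐ satisfying the passivity condition uᵀ(Cx + Du) ≥ 0, one has (Ax + Bu)ᵀ P (Ax + Bu) ≤ (1 − ε)·xᵀPx. In particular, along any trajectory x_{k+1} = A x_k + B u_k, y_k = C x_k + D u_k with u_kᵀ y_k ≥ 0 for all k, the Lyapunov function V(x) = xᵀPx satisfies V(x_{k+1}) ≤ (1−ε)V(x_k). -/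
open Matrix

/-- Exponential Lyapunov decrease from the passivity LMI with right-hand side `-ε P`. -/
theorem stmt_0 {n m : ℕ}
    (A : Matrix (Fin n) (Fin n) ℝ) (B : Matrix (Fin n) (Fin m) ℝ)
    (C : Matrix (Fin m) (Fin n) ℝ) (D : Matrix (Fin m) (Fin m) ℝ)
    (P : Matrix (Fin n) (Fin n) ℝ) (hPsymm : P.IsSymm)
    (hPpos : ∀ v : Fin n → ℝ, v ≠ 0 → 0 < v ⬝ᵥ (P *ᵥ v))
    (lam eps : ℝ) (hlam : 0 ≤ lam) (heps : 0 < eps)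
    (hLMI : ∀ v : Fin n ⊕ Fin m → ℝ,
      v ⬝ᵥ (((fromBlocks A B (1 : Matrix (Fin n) (Fin n) ℝ) (0 : Matrix (Fin n) (Fin m) ℝ))ᵀ * fromBlocks P 0 0 (-P) * fromBlocks A B (1 : Matrix (Fin n) (Fin n) ℝ) (0 : Matrix (Fin n) (Fin m) ℝ)
        + lam • fromBlocks 0 Cᵀ C (D + Dᵀ)
        + eps • fromBlocks P 0 0 0) *ᵥ v) ≤ 0) :
    (∀ (x : Fin n → ℝ) (u : Fin m → ℝ),
      0 ≤ u ⬝ᵥ (C *ᵥ x + D *ᵥ u) →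
      (A *ᵥ x + B *ᵥ u) ⬝ᵥ (P *ᵥ (A *ᵥ x + B *ᵥ u)) ≤ (1 - eps) * (x ⬝ᵥ (P *ᵥ x)))
    ∧ ∀ (x : ℕ → Fin n → ℝ) (u : ℕ → Fin m → ℝ) (y : ℕ → Fin m → ℝ),
        (∀ k, x (k + 1) = A *ᵥ x k + B *ᵥ u k) →
        (∀ k, y k = C *ᵥ x k + D *ᵥ u k) →
        (∀ k, 0 ≤ u k ⬝ᵥ y k) →
        ∀ k, x (k + 1) ⬝ᵥ (P *ᵥ x (k + 1)) ≤ (1 - eps) * (x k ⬝ᵥ (P *ᵥ x k)) := by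

  have key : ∀ {a b : Type} [Fintype a] [Fintype b] (M : Matrix a b ℝ) (v : b → ℝ) (w : a → ℝ),
      v ⬝ᵥ (Mᵀ *ᵥ w) = w ⬝ᵥ (M *ᵥ v) := by
    intro a b _ _ M v w
    rw [Matrix.mulVec_transpose, dotProduct_comm, Matrix.dotProduct_mulVec]
  have main : ∀ (x : Fin n → ℝ) (u : Fin m → ℝ),
      0 ≤ u ⬝ᵥ (C *ᵥ x + D *ᵥ u) →
      (A *ᵥ x + B *ᵥ u) ⬝ᵥ (P *ᵥ (A *ᵥ x + B *ᵥ u)) ≤ (1 - eps) * (x ⬝ᵥ (P *ᵥ x)) := by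
    intro x u hu
    have h := hLMI (Sum.elim x u)
    simp only [Matrix.add_mulVec, Matrix.smul_mulVec, ← Matrix.mulVec_mulVec,
      Matrix.fromBlocks_mulVec, Matrix.one_mulVec, Matrix.zero_mulVec, Matrix.neg_mulVec,
      add_zero, zero_add, dotProduct_add, dotProduct_smul,
      sumElim_dotProduct_sumElim, Sum.elim_comp_inl, Sum.elim_comp_inr, key,
      dotProduct_neg, dotProduct_zero, smul_eq_mul] at h
    rw [dotProduct_add] at hu
    have e1 : P *ᵥ (A *ᵥ x + B *ᵥ u) ⬝ᵥ A *ᵥ x + P *ᵥ (A *ᵥ x + B *ᵥ u) ⬝ᵥ B *ᵥ u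
        = (A *ᵥ x + B *ᵥ u) ⬝ᵥ (P *ᵥ (A *ᵥ x + B *ᵥ u)) := by
      rw [← dotProduct_add, dotProduct_comm]
    have e2 : -(P *ᵥ x) ⬝ᵥ x = -(x ⬝ᵥ (P *ᵥ x)) := by
      rw [neg_dotProduct, dotProduct_comm]
    rw [e1, e2] at h
    nlinarith [mul_nonneg hlam hu, h]
  refine ⟨main, ?_⟩
  intro x u y hx hy hu k
  rw [hx k]
  exact main (x k) (u k) (by rw [← hy k]; exact hu k)
end

section
/- Let n ∈ ℕ, let φ : ℝⁿ → ℝⁿ satisfy φ(0) = 0, and let c > 0. For an input sequence g : ℕ → ℝⁿ, let x : ℕ → ℝⁿ be the trajectory defined by x₀ = 0 and x_{k+1} = φ(x_k) + g_k for all k. Assume the ℓ₂-gain hypothesis: for every square-summable g (i.e. ∑_{k=0}^∞ ‖g_k‖² < ∞) with trajectory x, one has ∑_{k=0}^{T} ‖x_k‖² ≤ c·∑_{k=0}^∞ ‖g_k‖² for every T ∈ ℕ. Then for every square-summable g with trajectory x and every k ∈ ℕ: ‖x_{k+1}‖² ≤ ∑_{i=0}^{k} c·(1 − 1/c)^{k−i}·‖g_i‖².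 -/
open Finset

/-- Trajectory of the unforced-plus-input recursion starting at `u`. -/
private def traj {n : ℕ} (φ : EuclideanSpace ℝ (Fin n) → EuclideanSpace ℝ (Fin n))
    (u : EuclideanSpace ℝ (Fin n)) (h : ℕ → EuclideanSpace ℝ (Fin n)) :
    ℕ → EuclideanSpace ℝ (Fin n)
  | 0 => u
  | (t+1) => φ (traj φ u h t) + h t

private lemma traj_congr {n : ℕ} (φ : EuclideanSpace ℝ (Fin n) → EuclideanSpace ℝ (Fin n))
    (u : EuclideanSpace ℝ (Fin n)) (h1 h2 : ℕ → EuclideanSpace ℝ (Fin n)) :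
    ∀ t : ℕ, (∀ i < t, h1 i = h2 i) → traj φ u h1 t = traj φ u h2 t := by
  intro t
  induction t with
  | zero => intro _; rfl
  | succ t ih =>
      intro hh
      simp only [traj]
      rw [ih (fun i hi => hh i (Nat.lt_succ_of_lt hi)), hh t (Nat.lt_succ_self t)]

/-- The set of values of the "available storage" supremum. -/
private def Aset {n : ℕ} (φ : EuclideanSpace ℝ (Fin n) → EuclideanSpace ℝ (Fin n))
    (c : ℝ) (u : EuclideanSpace ℝ (Fin n)) : Set ℝ :=
  { r | ∃ (T : ℕ) (h : ℕ → EuclideanSpace ℝ (Fin n)),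
      r = (∑ t ∈ Finset.range (T+1), ‖traj φ u h t‖ ^ 2)
        - c * ∑ t ∈ Finset.range T, ‖h t‖ ^ 2 }

private lemma sq_mem_Aset {n : ℕ} (φ : EuclideanSpace ℝ (Fin n) → EuclideanSpace ℝ (Fin n))
    (c : ℝ) (u : EuclideanSpace ℝ (Fin n)) : ‖u‖ ^ 2 ∈ Aset φ c u := by
  refine ⟨0, fun _ => 0, ?_⟩
  simp [traj]

private lemma Aset_ub {n : ℕ} (φ : EuclideanSpace ℝ (Fin n) → EuclideanSpace ℝ (Fin n))
    (hφ0 : φ 0 = 0) (c : ℝ)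
    (hgain : ∀ g x : ℕ → EuclideanSpace ℝ (Fin n),
      Summable (fun k => ‖g k‖ ^ 2) → x 0 = 0 → (∀ k, x (k + 1) = φ (x k) + g k) →
      ∀ T : ℕ, ∑ k ∈ Finset.range (T + 1), ‖x k‖ ^ 2 ≤ c * ∑' k : ℕ, ‖g k‖ ^ 2)
    (u : EuclideanSpace ℝ (Fin n)) :
    ∀ r ∈ Aset φ c u, r ≤ c * ‖u‖ ^ 2 := by
  rintro r ⟨T, h, rfl⟩
  set h' : ℕ → EuclideanSpace ℝ (Fin n) := fun i => if i < T then h i else 0 with hh'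
  set g : ℕ → EuclideanSpace ℝ (Fin n) := fun i => Nat.casesOn i u h' with hg
  set x : ℕ → EuclideanSpace ℝ (Fin n) := fun i => Nat.casesOn i 0 (traj φ u h') with hx
  have hgz : ∀ i ∉ Finset.range (T+1), ‖g i‖ ^ 2 = 0 := by
    intro i hi
    rw [Finset.mem_range, not_lt] at hi
    obtain ⟨j, rfl⟩ : ∃ j, i = j + 1 := ⟨i - 1, by omega⟩
    have : h' j = 0 := by simp only [hh']; rw [if_neg (by omega)]
    simp [hg, this]
  have hsum : Summable (fun k => ‖g k‖ ^ 2) := summable_of_ne_finset_zero hgz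
  have htsum : ∑' k : ℕ, ‖g k‖ ^ 2 = ∑ k ∈ Finset.range (T+1), ‖g k‖ ^ 2 :=
    tsum_eq_sum hgz
  have hx0 : x 0 = 0 := rfl
  have hrec : ∀ k, x (k + 1) = φ (x k) + g k := by
    intro k
    cases k with
    | zero => show traj φ u h' 0 = φ 0 + u; rw [hφ0]; simp [traj]
    | succ j => rfl
  have key := hgain g x hsum hx0 hrec (T+1)
  rw [htsum] at key
  have hL : ∑ k ∈ Finset.range (T+2), ‖x k‖ ^ 2
      = ∑ j ∈ Finset.range (T+1), ‖traj φ u h' j‖ ^ 2 := by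
    rw [Finset.sum_range_succ' (fun k => ‖x k‖ ^ 2) (T+1)]
    simp [hx]
  have hR : ∑ k ∈ Finset.range (T+1), ‖g k‖ ^ 2
      = ‖u‖ ^ 2 + ∑ j ∈ Finset.range T, ‖h j‖ ^ 2 := by
    rw [Finset.sum_range_succ' (fun k => ‖g k‖ ^ 2) T]
    have : ∀ j ∈ Finset.range T, ‖g (j+1)‖ ^ 2 = ‖h j‖ ^ 2 := by
      intro j hj
      rw [Finset.mem_range] at hj
      simp only [hg, hh']
      rw [if_pos hj]
    rw [Finset.sum_congr rfl this]
    simp [hg]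
    ring
  have htraj : ∀ j ∈ Finset.range (T+1), ‖traj φ u h' j‖ ^ 2 = ‖traj φ u h j‖ ^ 2 := by
    intro j hj
    rw [Finset.mem_range] at hj
    rw [traj_congr φ u h' h j (fun i hi => by
      simp only [hh']; rw [if_pos (by omega)])]
  rw [hL, Finset.sum_congr rfl htraj, hR] at key
  nlinarith [key]

private lemma Aset_shift {n : ℕ} (φ : EuclideanSpace ℝ (Fin n) → EuclideanSpace ℝ (Fin n))
    (c : ℝ) (u w : EuclideanSpace ℝ (Fin n)) :
    ∀ r ∈ Aset φ c (φ u + w), ‖u‖ ^ 2 + r - c * ‖w‖ ^ 2 ∈ Aset φ c u := by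
  rintro r ⟨T, h, rfl⟩
  set h'' : ℕ → EuclideanSpace ℝ (Fin n) := fun i => Nat.casesOn i w h with hh''
  refine ⟨T + 1, h'', ?_⟩
  have htraj : ∀ t, traj φ u h'' (t + 1) = traj φ (φ u + w) h t := by
    intro t
    induction t with
    | zero => show φ (traj φ u h'' 0) + h'' 0 = _; simp [traj, hh'']
    | succ t ih => show φ (traj φ u h'' (t+1)) + h'' (t+1) = _; rw [ih]; rfl
  have h1 : ∑ t ∈ Finset.range (T+2), ‖traj φ u h'' t‖ ^ 2
      = ‖u‖ ^ 2 + ∑ t ∈ Finset.range (T+1), ‖traj φ (φ u + w) h t‖ ^ 2 := by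
    rw [Finset.sum_range_succ' (fun t => ‖traj φ u h'' t‖ ^ 2) (T+1)]
    rw [Finset.sum_congr rfl (fun t _ => by rw [htraj t])]
    simp [traj]
    ring
  have h2 : ∑ t ∈ Finset.range (T+1), ‖h'' t‖ ^ 2
      = ‖w‖ ^ 2 + ∑ t ∈ Finset.range T, ‖h t‖ ^ 2 := by
    rw [Finset.sum_range_succ' (fun t => ‖h'' t‖ ^ 2) T]
    simp [hh'']
    ring
  rw [h1, h2]
  ring

/-- Lemma 15: an ℓ₂ gain bound for the perturbed recursion yields a
pointwise-in-time exponential bound. -/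
theorem stmt_1 {n : ℕ} (φ : EuclideanSpace ℝ (Fin n) → EuclideanSpace ℝ (Fin n))
    (hφ0 : φ 0 = 0) (c : ℝ) (hc : 0 < c)
    (hgain : ∀ g x : ℕ → EuclideanSpace ℝ (Fin n),
      Summable (fun k => ‖g k‖ ^ 2) → x 0 = 0 → (∀ k, x (k + 1) = φ (x k) + g k) →
      ∀ T : ℕ, ∑ k ∈ Finset.range (T + 1), ‖x k‖ ^ 2 ≤ c * ∑' k : ℕ, ‖g k‖ ^ 2) :
    ∀ g x : ℕ → EuclideanSpace ℝ (Fin n),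
      Summable (fun k => ‖g k‖ ^ 2) → x 0 = 0 → (∀ k, x (k + 1) = φ (x k) + g k) →
      ∀ k : ℕ, ‖x (k + 1)‖ ^ 2 ≤
        ∑ i ∈ Finset.range (k + 1), c * (1 - 1 / c) ^ (k - i) * ‖g i‖ ^ 2 := by
  intro g x hsumg hx0 hrec k
  -- trivial case: n = 0
  rcases Nat.eq_zero_or_pos n with hn | hn
  · subst hn
    have hz : ∀ v : EuclideanSpace ℝ (Fin 0), v = 0 := fun v => Subsingleton.elim v 0
    have h1 : ‖x (k+1)‖ ^ 2 = 0 := by rw [hz (x (k+1))]; simp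
    have h2 : ∀ i ∈ Finset.range (k+1), c * (1 - 1/c) ^ (k - i) * ‖g i‖ ^ 2 = 0 := by
      intro i _; rw [hz (g i)]; simp
    rw [h1, Finset.sum_congr rfl h2]
    simp
  -- now n > 0 ; define the storage function W
  set W : EuclideanSpace ℝ (Fin n) → ℝ := fun u => sSup (Aset φ c u) with hW
  have hne : ∀ u, (Aset φ c u).Nonempty := fun u => ⟨‖u‖ ^ 2, sq_mem_Aset φ c u⟩
  have hbdd : ∀ u, BddAbove (Aset φ c u) :=
    fun u => ⟨c * ‖u‖ ^ 2, fun r hr => Aset_ub φ hφ0 c hgain u r hr⟩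
  have hWub : ∀ u, W u ≤ c * ‖u‖ ^ 2 :=
    fun u => csSup_le (hne u) (Aset_ub φ hφ0 c hgain u)
  have hWlb : ∀ u, ‖u‖ ^ 2 ≤ W u :=
    fun u => le_csSup (hbdd u) (sq_mem_Aset φ c u)
  have hWdis : ∀ u w, W (φ u + w) ≤ W u - ‖u‖ ^ 2 + c * ‖w‖ ^ 2 := by
    intro u w
    refine csSup_le (hne _) (fun r hr => ?_)
    have hm := Aset_shift φ c u w r hr
    have := le_csSup (hbdd u) hm
    linarith
  -- c ≥ 1 since n > 0
  have hc1 : (1:ℝ) ≤ c := by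
    set e : EuclideanSpace ℝ (Fin n) := EuclideanSpace.single ⟨0, hn⟩ (1:ℝ) with he
    have hnorm : ‖e‖ = 1 := by rw [he, EuclideanSpace.norm_single]; simp
    have h1 := hWlb e
    have h2 := hWub e
    rw [hnorm] at h1 h2
    nlinarith
  have hfrac : (0:ℝ) ≤ 1 - 1/c := by
    rw [sub_nonneg, div_le_one hc]; exact hc1
  -- main induction
  have main : ∀ k, W (x (k+1)) ≤
      ∑ i ∈ Finset.range (k + 1), c * (1 - 1 / c) ^ (k - i) * ‖g i‖ ^ 2 := by
    intro k
    induction k with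
    | zero =>
        have h1 := hWdis (x 0) (g 0)
        rw [← hrec 0] at h1
        have h2 : W (x 0) ≤ 0 := by
          have := hWub (x 0); rw [hx0] at this ⊢; simpa using this
        have h3 : ‖x 0‖ ^ 2 = 0 := by rw [hx0]; simp
        have hrhs : ∑ i ∈ Finset.range (0 + 1), c * (1 - 1 / c) ^ (0 - i) * ‖g i‖ ^ 2
            = c * ‖g 0‖ ^ 2 := by simp
        rw [hrhs]
        nlinarith [h1, h2, h3]
    | succ k ih =>
        have h1 := hWdis (x (k+1)) (g (k+1))
        rw [← hrec (k+1)] at h1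
        have h2 : W (x (k+1)) / c ≤ ‖x (k+1)‖ ^ 2 := by
          rw [div_le_iff₀ hc]
          calc W (x (k+1)) ≤ c * ‖x (k+1)‖ ^ 2 := hWub _
            _ = ‖x (k+1)‖ ^ 2 * c := by ring
        have h3 : W (x (k+2)) ≤ (1 - 1/c) * W (x (k+1)) + c * ‖g (k+1)‖ ^ 2 := by
          have : W (x (k+1)) - W (x (k+1)) / c = (1 - 1/c) * W (x (k+1)) := by
            field_simp
          nlinarith [h1, h2]
        have h4 : (1 - 1/c) * W (x (k+1)) ≤
            (1 - 1/c) * ∑ i ∈ Finset.range (k + 1), c * (1 - 1 / c) ^ (k - i) * ‖g i‖ ^ 2 :=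
          mul_le_mul_of_nonneg_left ih hfrac
        have h5 : ∑ i ∈ Finset.range (k + 2), c * (1 - 1 / c) ^ (k + 1 - i) * ‖g i‖ ^ 2
            = (1 - 1/c) * (∑ i ∈ Finset.range (k + 1), c * (1 - 1 / c) ^ (k - i) * ‖g i‖ ^ 2)
              + c * ‖g (k+1)‖ ^ 2 := by
          rw [Finset.sum_range_succ]
          have hlast : c * (1 - 1/c) ^ (k + 1 - (k+1)) * ‖g (k+1)‖ ^ 2 = c * ‖g (k+1)‖ ^ 2 := by
            simp
          rw [hlast, Finset.mul_sum]
          congr 1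
          refine Finset.sum_congr rfl (fun i hi => ?_)
          rw [Finset.mem_range] at hi
          have : k + 1 - i = (k - i) + 1 := by omega
          rw [this, pow_succ]
          ring
        rw [h5]
        linarith
  calc ‖x (k+1)‖ ^ 2 ≤ W (x (k+1)) := hWlb _
    _ ≤ _ := main k
end

section
/- Let n ∈ ℕ, let φ : ℝⁿ → ℝⁿ satisfy φ(0) = 0, and let c > 0. For an input sequence g : ℕ → ℝⁿ, let x : ℕ → ℝⁿ be the trajectory defined by x₀ = 0 and x_{k+1} = φ(x_k) + g_k for all k. Assume the ℓ₂-gain hypothesis: for every square-summable g (i.e. ∑_{k=0}^∞ ‖g_k‖² < ∞) with trajectory x, one has ∑_{k=0}^{T} ‖x_k‖² ≤ c·∑_{k=0}^∞ ‖g_k‖² for every T ∈ ℕ. Then for every ξ ∈ ℝⁿ, the autonomous trajectory z : ℕ → ℝⁿ defined by z₀ = ξ and z_{k+1} = φ(z_k) satisfies ‖z_k‖² ≤ c·(1 − 1/c)^k·‖ξ‖² for every k ∈ ℕ; in particular the autonomous system is exponentially stable with rate ρ = √(1 − 1/c). -/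
open Finset Function

/-!
The ℓ₂ gain bound applied to the impulse input `g = (y, 0, 0, …)` bounds the total cost
`W y = ∑ₖ ‖φ^[k] y‖²` of the autonomous orbit of every `y` by `c ‖y‖²`. Then `W` is a Lyapunov
function: `W (φ y) = W y - ‖y‖² ≤ (1 - 1/c) W y`, and `‖y‖² ≤ W y ≤ c ‖y‖²` turns the geometric
decay of `W` along the orbit into the claimed bound.
-/

lemma one_sub_one_div_nonneg {c : ℝ} (hc : 1 ≤ c) : 0 ≤ 1 - 1 / c := by
  rw [sub_nonneg, one_div]
  exact inv_le_one_of_one_le₀ hc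

section OrbitCost

variable {α : Type*} (f : α → α) (V : α → ℝ)

noncomputable def orbitCost (y : α) : ℝ := ∑' k, V (f^[k] y)

variable {f V} {c : ℝ} (hV : ∀ y, 0 ≤ V y)
  (hsum : ∀ y T, ∑ k ∈ range T, V (f^[k] y) ≤ c * V y)
include hV hsum

lemma summable_orbit (y : α) : Summable fun k => V (f^[k] y) :=
  summable_of_sum_range_le (fun _ => hV _) (hsum y)

lemma orbitCost_le (y : α) : orbitCost f V y ≤ c * V y :=
  Real.tsum_le_of_sum_range_le (fun _ => hV _) (hsum y)

lemma le_orbitCost (y : α) : V y ≤ orbitCost f V y := by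
  simpa [orbitCost] using (summable_orbit hV hsum y).le_tsum 0 fun k _ => hV _

lemma orbitCost_apply (y : α) : orbitCost f V (f y) = orbitCost f V y - V y := by
  have h := (summable_orbit hV hsum y).tsum_eq_zero_add
  simp only [iterate_zero_apply, iterate_succ_apply] at h
  rw [orbitCost, orbitCost, h]
  ring

lemma orbitCost_iterate_le (hc : 1 ≤ c) (y : α) (k : ℕ) :
    orbitCost f V (f^[k] y) ≤ (1 - 1 / c) ^ k * orbitCost f V y := by
  have hρ : 0 ≤ 1 - 1 / c := one_sub_one_div_nonneg hc
  induction k with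
  | zero => simp
  | succ k ih =>
    set w := f^[k] y
    have hstep : orbitCost f V (f w) ≤ (1 - 1 / c) * orbitCost f V w := by
      have hlow : orbitCost f V w / c ≤ V w := by
        rw [div_le_iff₀ (by linarith), mul_comm]
        exact orbitCost_le hV hsum w
      rw [orbitCost_apply hV hsum]
      linarith [show (1 - 1 / c) * orbitCost f V w = orbitCost f V w - orbitCost f V w / c by ring]
    calc orbitCost f V (f^[k + 1] y) = orbitCost f V (f w) := by rw [iterate_succ_apply']
      _ ≤ (1 - 1 / c) * orbitCost f V w := hstep
      _ ≤ (1 - 1 / c) * ((1 - 1 / c) ^ k * orbitCost f V y) := by gcongr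
      _ = (1 - 1 / c) ^ (k + 1) * orbitCost f V y := by ring

theorem iterate_le_geometric_of_sum_orbit_le (y : α) (k : ℕ) :
    V (f^[k] y) ≤ c * (1 - 1 / c) ^ k * V y := by
  rcases le_or_gt 1 c with hc | hc
  · calc V (f^[k] y) ≤ orbitCost f V (f^[k] y) := le_orbitCost hV hsum _
      _ ≤ (1 - 1 / c) ^ k * orbitCost f V y := orbitCost_iterate_le hV hsum hc y k
      _ ≤ (1 - 1 / c) ^ k * (c * V y) := by
          gcongr
          · exact pow_nonneg (one_sub_one_div_nonneg hc) k
          · exact orbitCost_le hV hsum y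
      _ = c * (1 - 1 / c) ^ k * V y := by ring
  · -- `T = 1` gives `V ≤ c V`, so for `c < 1` the cost vanishes identically.
    have hV0 : ∀ y, V y = 0 := fun y => by
      have h := hsum y 1
      simp only [range_one, sum_singleton, iterate_zero_apply] at h
      nlinarith [hV y]
    simp [hV0]

end OrbitCost

section Gain

variable {E : Type*} [SeminormedAddCommGroup E]

def HasL2GainBound (φ : E → E) (c : ℝ) : Prop :=
  ∀ g x : ℕ → E, Summable (fun k => ‖g k‖ ^ 2) → x 0 = 0 → (∀ k, x (k + 1) = φ (x k) + g k) →
    ∀ T : ℕ, ∑ k ∈ range (T + 1), ‖x k‖ ^ 2 ≤ c * ∑' k : ℕ, ‖g k‖ ^ 2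

/-- The response to the impulse `g = (y, 0, 0, …)` is `(0, y, φ y, φ² y, …)`. -/
lemma HasL2GainBound.sum_range_norm_iterate_sq_le {φ : E → E} {c : ℝ} (hφ0 : φ 0 = 0)
    (hgain : HasL2GainBound φ c) (y : E) (T : ℕ) :
    ∑ k ∈ range T, ‖φ^[k] y‖ ^ 2 ≤ c * ‖y‖ ^ 2 := by
  let g : ℕ → E := fun k => if k = 0 then y else 0
  let x : ℕ → E := fun k => if k = 0 then 0 else φ^[k - 1] y
  have hg : HasSum (fun k => ‖g k‖ ^ 2) (‖y‖ ^ 2) := by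
    convert hasSum_ite_eq 0 (‖y‖ ^ 2) using 2 with k
    split_ifs <;> simp [g, *]
  have hx : ∀ k, x (k + 1) = φ (x k) + g k := by
    rintro (_ | k) <;> simp [x, g, hφ0, iterate_succ_apply']
  have h := hgain g x hg.summable rfl hx T
  simpa [hg.tsum_eq, sum_range_succ', x] using h

end Gain

lemma eq_iterate_of_succ {α : Type*} {f : α → α} {z : ℕ → α} (hz : ∀ k, z (k + 1) = f (z k))
    (k : ℕ) : z k = f^[k] (z 0) := by
  induction k with
  | zero => rfl
  | succ k ih => rw [hz, ih, iterate_succ_apply']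

theorem stmt_2_general {n : ℕ} (φ : EuclideanSpace ℝ (Fin n) → EuclideanSpace ℝ (Fin n))
    (hφ0 : φ 0 = 0) (c : ℝ)
    (hgain : ∀ g x : ℕ → EuclideanSpace ℝ (Fin n),
      Summable (fun k => ‖g k‖ ^ 2) → x 0 = 0 → (∀ k, x (k + 1) = φ (x k) + g k) →
      ∀ T : ℕ, ∑ k ∈ Finset.range (T + 1), ‖x k‖ ^ 2 ≤ c * ∑' k : ℕ, ‖g k‖ ^ 2) :
    ∀ (ξ : EuclideanSpace ℝ (Fin n)) (z : ℕ → EuclideanSpace ℝ (Fin n)),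
      z 0 = ξ → (∀ k, z (k + 1) = φ (z k)) →
      ∀ k : ℕ, ‖z k‖ ^ 2 ≤ c * (1 - 1 / c) ^ k * ‖ξ‖ ^ 2 := by
  rintro ξ z rfl hz k
  rw [eq_iterate_of_succ hz k]
  exact iterate_le_geometric_of_sum_orbit_le (V := fun y => ‖y‖ ^ 2) (fun _ => by positivity)
    (HasL2GainBound.sum_range_norm_iterate_sq_le hφ0 hgain) (z 0) k

/-- Section V: an ℓ₂ gain bound for the perturbed recursion implies exponential
stability of the autonomous recursion with rate `√(1 - 1/c)`. -/
theorem stmt_2 {n : ℕ} (φ : EuclideanSpace ℝ (Fin n) → EuclideanSpace ℝ (Fin n))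
    (hφ0 : φ 0 = 0) (c : ℝ) (hc : 0 < c)
    (hgain : ∀ g x : ℕ → EuclideanSpace ℝ (Fin n),
      Summable (fun k => ‖g k‖ ^ 2) → x 0 = 0 → (∀ k, x (k + 1) = φ (x k) + g k) →
      ∀ T : ℕ, ∑ k ∈ Finset.range (T + 1), ‖x k‖ ^ 2 ≤ c * ∑' k : ℕ, ‖g k‖ ^ 2) :
    ∀ (ξ : EuclideanSpace ℝ (Fin n)) (z : ℕ → EuclideanSpace ℝ (Fin n)),
      z 0 = ξ → (∀ k, z (k + 1) = φ (z k)) →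
      ∀ k : ℕ, ‖z k‖ ^ 2 ≤ c * (1 - 1 / c) ^ k * ‖ξ‖ ^ 2 :=
  stmt_2_general φ hφ0 c hgain
end

section
/- Exponential decay for a nilpotent recursion with exponentially decaying input. Let n, p ∈ ℕ, let Ā ∈ ℝ^{n×n} satisfy Āⁿ = 0, let B̄ ∈ ℝ^{n×p}, let ρ ∈ (0,1) and c ≥ 0, let h : ℕ → ℝᵖ satisfy ‖h_k‖ ≤ c·ρᵏ for all k, and let x : ℕ → ℝⁿ satisfy x_{k+1} = Ā x_k + B̄ h_k for all k (with arbitrary x₀). Then for every k ≥ n: ‖x_k‖ ≤ (∑_{i=0}^{n−1} ‖Āⁱ B̄‖) · c · ρ^{k−n}, where ‖Āⁱ B̄‖ denotes the operator norm of the matrix Āⁱ B̄ as a linear map from ℝᵖ to ℝⁿ with Euclidean norms. In particular ‖x_k‖ decays exponentially with rate ρ. -/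
open Matrix

lemma euclid_mul_apply {n m p : ℕ} (M : Matrix (Fin n) (Fin m) ℝ)
    (N : Matrix (Fin m) (Fin p) ℝ) (v : EuclideanSpace ℝ (Fin p)) :
    Matrix.toEuclideanLin (M * N) v = Matrix.toEuclideanLin M (Matrix.toEuclideanLin N v) := by
  simp only [Matrix.toEuclideanLin_eq_toLin,
    Matrix.toLin_mul _ (PiLp.basisFun 2 ℝ (Fin m)) _, LinearMap.comp_apply]

/-- Key estimate in the proof of Proposition 5: a nilpotent recursion driven by an
exponentially decaying input has exponentially decaying state. -/
theorem stmt_6 {n p : ℕ}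
    (Abar : Matrix (Fin n) (Fin n) ℝ) (hnil : Abar ^ n = 0)
    (Bbar : Matrix (Fin n) (Fin p) ℝ)
    (ρ : ℝ) (hρ : ρ ∈ Set.Ioo (0 : ℝ) 1) (c : ℝ) (hc : 0 ≤ c)
    (h : ℕ → EuclideanSpace ℝ (Fin p)) (hh : ∀ k, ‖h k‖ ≤ c * ρ ^ k)
    (x : ℕ → EuclideanSpace ℝ (Fin n))
    (hx : ∀ k, x (k + 1) = Matrix.toEuclideanLin Abar (x k)
        + Matrix.toEuclideanLin Bbar (h k)) :
    ∀ k, n ≤ k →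
      ‖x k‖ ≤ (∑ i ∈ Finset.range n,
          ‖LinearMap.toContinuousLinearMap (Matrix.toEuclideanLin (Abar ^ i * Bbar))‖)
        * c * ρ ^ (k - n) := by
  obtain ⟨hρ0, hρ1⟩ := hρ
  -- general solution formula
  have key : ∀ m j, x (j + m) = Matrix.toEuclideanLin (Abar ^ m) (x j)
      + ∑ i ∈ Finset.range m, Matrix.toEuclideanLin (Abar ^ i * Bbar) (h (j + m - 1 - i)) := by
    intro m
    induction m with
    | zero => intro j; simp [Matrix.toEuclideanLin_eq_toLin]
    | succ m ih =>
      intro j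
      have hjm : j + (m + 1) = (j + m) + 1 := by ring
      rw [hjm, hx, ih j]
      have hsum : ∑ i ∈ Finset.range (m + 1),
          Matrix.toEuclideanLin (Abar ^ i * Bbar) (h (j + m + 1 - 1 - i))
          = (∑ i ∈ Finset.range m, Matrix.toEuclideanLin Abar
              (Matrix.toEuclideanLin (Abar ^ i * Bbar) (h (j + m - 1 - i))))
            + Matrix.toEuclideanLin Bbar (h (j + m)) := by
        rw [Finset.sum_range_succ']
        congr 1
        · apply Finset.sum_congr rfl
          intro i _
          have : j + m + 1 - 1 - (i + 1) = j + m - 1 - i := by omega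
          rw [this, show Abar ^ (i + 1) * Bbar = Abar * (Abar ^ i * Bbar) by
            rw [pow_succ', Matrix.mul_assoc], euclid_mul_apply]
        · have : j + m + 1 - 1 - 0 = j + m := by omega
          rw [this]; simp
      rw [hsum]
      have e1 : Matrix.toEuclideanLin (Abar ^ (m + 1)) (x j)
          = Matrix.toEuclideanLin Abar (Matrix.toEuclideanLin (Abar ^ m) (x j)) := by
        rw [show Abar ^ (m + 1) = Abar * Abar ^ m from pow_succ' Abar m, euclid_mul_apply]
      rw [e1, map_add, map_sum]
      abel
  intro k hk
  obtain ⟨j, rfl⟩ : ∃ j, k = j + n := ⟨k - n, by omega⟩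
  have hform := key n j
  rw [hnil] at hform
  simp only [map_zero, LinearMap.zero_apply, zero_add] at hform
  rw [hform]
  have hsub : j + n - n = j := by omega
  rw [hsub]
  calc ‖∑ i ∈ Finset.range n, Matrix.toEuclideanLin (Abar ^ i * Bbar) (h (j + n - 1 - i))‖
      ≤ ∑ i ∈ Finset.range n, ‖Matrix.toEuclideanLin (Abar ^ i * Bbar) (h (j + n - 1 - i))‖ :=
        norm_sum_le _ _
    _ ≤ ∑ i ∈ Finset.range n,
        ‖LinearMap.toContinuousLinearMap (Matrix.toEuclideanLin (Abar ^ i * Bbar))‖ * (c * ρ ^ j) := by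
        apply Finset.sum_le_sum
        intro i hi
        have hle := (LinearMap.toContinuousLinearMap
          (Matrix.toEuclideanLin (Abar ^ i * Bbar))).le_opNorm (h (j + n - 1 - i))
        simp only [LinearMap.coe_toContinuousLinearMap'] at hle
        refine hle.trans ?_
        apply mul_le_mul_of_nonneg_left _ (norm_nonneg _)
        refine (hh _).trans ?_
        apply mul_le_mul_of_nonneg_left _ hc
        apply pow_le_pow_of_le_one hρ0.le hρ1.le
        have : i < n := Finset.mem_range.mp hi
        omega
    _ = (∑ i ∈ Finset.range n,
          ‖LinearMap.toContinuousLinearMap (Matrix.toEuclideanLin (Abar ^ i * Bbar))‖)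
        * c * ρ ^ j := by rw [← Finset.sum_mul]; ring
end

section
/- Off-by-ℓ Zames–Falb ρ-hard IQC. Let n ∈ ℕ and let g : ℝⁿ → ℝ be an admissible potential with gradient ∇g. Let ρ ∈ (0,1], γ ∈ (0,1], and ℓ ≥ 1 a natural number. Let y : ℕ → ℝⁿ be any sequence and set u_k = ∇g(y_k), adopting the convention y_j = 0 for j < 0. Then for every T ∈ ℕ: ∑_{k=0}^{T} ρ^{−2k} ⟨u_k, y_k − γ·ρ^{2ℓ}·y_{k−ℓ}⟩ ≥ 0. -/
open scoped RealInnerProductSpace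

/-!
Convexity gives the first-order bound `g(y) + ⟪∇g(y), w - y⟫ ≤ g(w)`, and `g(c • z) ≤ c g(z)` for
`c ∈ [0, 1]` since `g(0) = 0`. With `c = γ ρ^{2ℓ}`, `w = c • y_{k-ℓ}`, the `k`-th summand is therefore
at least `f_k - γ f_{k-ℓ}`, where `f_k = ρ^{-2k} g(y_k) ≥ 0`. Summing, the delayed terms are a
γ-multiple of a sub-sum of the `f_k`, so the total is nonnegative because `γ ≤ 1`.
-/

open Set Finset

theorem ConvexOn.add_inner_gradient_sub_le {F : Type*} [NormedAddCommGroup F]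
    [InnerProductSpace ℝ F] [CompleteSpace F] {g : F → ℝ} (hg : ConvexOn ℝ univ g) {a : F}
    (ha : DifferentiableAt ℝ g a) (b : F) :
    g a + ⟪gradient g a, b - a⟫ ≤ g b := by
  have hline : ConvexOn ℝ univ (g ∘ (AffineMap.lineMap a b : ℝ → F)) := by
    simpa using hg.comp_affineMap (AffineMap.lineMap a b : ℝ →ᵃ[ℝ] F)
  have hderiv : HasDerivAt (g ∘ (AffineMap.lineMap a b : ℝ → F)) ⟪gradient g a, b - a⟫ 0 := by
    have hga : HasFDerivAt g (InnerProductSpace.toDual ℝ F (gradient g a))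
        (AffineMap.lineMap a b (0 : ℝ)) := by
      rw [AffineMap.lineMap_apply_zero]
      exact hasGradientAt_iff_hasFDerivAt.mp ha.hasGradientAt
    simpa only [InnerProductSpace.toDual_apply_apply] using
      hga.comp_hasDerivAt 0 AffineMap.hasDerivAt_lineMap
  have := hline.le_slope_of_hasDerivAt (mem_univ 0) (mem_univ 1) one_pos hderiv
  simp only [slope_def_field, Function.comp_apply, AffineMap.lineMap_apply_zero,
    AffineMap.lineMap_apply_one, sub_zero, div_one] at this
  linarith

theorem ConvexOn.map_smul_le {𝕜 E β : Type*} [Field 𝕜] [LinearOrder 𝕜] [IsStrictOrderedRing 𝕜]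
    [AddCommGroup E] [Module 𝕜 E] [AddCommGroup β] [PartialOrder β] [Module 𝕜 β]
    {g : E → β} (hg : ConvexOn 𝕜 univ g) (hg0 : g 0 = 0) {c : 𝕜} (hc0 : 0 ≤ c) (hc1 : c ≤ 1)
    (z : E) : g (c • z) ≤ c • g z := by
  simpa [hg0] using hg.2 (mem_univ z) (mem_univ 0) hc0 (sub_nonneg.2 hc1) (add_sub_cancel c 1)

theorem ConvexOn.sub_mul_le_inner_gradient {F : Type*} [NormedAddCommGroup F]
    [InnerProductSpace ℝ F] [CompleteSpace F] {g : F → ℝ} (hg : ConvexOn ℝ univ g)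
    (hg0 : g 0 = 0) {y : F} (hy : DifferentiableAt ℝ g y) {c : ℝ} (hc0 : 0 ≤ c) (hc1 : c ≤ 1)
    (z : F) : g y - c * g z ≤ ⟪gradient g y, y - c • z⟫ := by
  have := hg.add_inner_gradient_sub_le hy (c • z)
  have := hg.map_smul_le hg0 hc0 hc1 z
  rw [← neg_sub, inner_neg_right, smul_eq_mul] at *
  linarith

theorem sum_range_ite_delay {M : Type*} [AddCommMonoid M] (w : ℕ → M) (ℓ N : ℕ) :
    ∑ k ∈ range N, (if ℓ ≤ k then w (k - ℓ) else 0) = ∑ j ∈ range (N - ℓ), w j := by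
  induction N with
  | zero => simp
  | succ N ih =>
    rw [sum_range_succ, ih]
    by_cases h : ℓ ≤ N
    · rw [if_pos h, show N + 1 - ℓ = N - ℓ + 1 by omega, sum_range_succ]
    · rw [if_neg h, show N + 1 - ℓ = N - ℓ by omega, add_zero]

theorem sum_range_sub_delay_nonneg {f : ℕ → ℝ} (hf : ∀ k, 0 ≤ f k) {γ : ℝ} (hγ : γ ≤ 1)
    (ℓ N : ℕ) : 0 ≤ ∑ k ∈ range N, (f k - if ℓ ≤ k then γ * f (k - ℓ) else 0) := by
  rw [sum_sub_distrib, sum_range_ite_delay (fun j ↦ γ * f j), sub_nonneg]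
  calc ∑ j ∈ range (N - ℓ), γ * f j ≤ ∑ j ∈ range (N - ℓ), f j :=
        sum_le_sum fun j _ ↦ mul_le_of_le_one_left (hf j) hγ
    _ ≤ ∑ k ∈ range N, f k :=
        sum_le_sum_of_subset_of_nonneg (range_subset_range.2 (Nat.sub_le N ℓ)) fun k _ _ ↦ hf k

theorem zpow_neg_two_mul_mul_pow {ρ : ℝ} (hρ : ρ ≠ 0) {ℓ k : ℕ} (h : ℓ ≤ k) :
    ρ ^ (-(2 * (k : ℤ))) * ρ ^ (2 * ℓ) = ρ ^ (-(2 * ((k - ℓ : ℕ) : ℤ))) := by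
  rw [← zpow_natCast, ← zpow_add₀ hρ]
  push_cast [Nat.cast_sub h]
  ring_nf

theorem stmt_7_general {n : ℕ} (g : EuclideanSpace ℝ (Fin n) → ℝ)
    (hconv : ConvexOn ℝ Set.univ g) (hdiff : Differentiable ℝ g)
    (hnonneg : ∀ x, 0 ≤ g x) (hg0 : g 0 = 0)
    (ρ : ℝ) (hρ : ρ ∈ Set.Ioc (0 : ℝ) 1) (γ : ℝ) (hγ : γ ∈ Set.Ioc (0 : ℝ) 1)
    (ℓ : ℕ)
    (y : ℕ → EuclideanSpace ℝ (Fin n)) (u : ℕ → EuclideanSpace ℝ (Fin n))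
    (hu : ∀ k, u k = gradient g (y k)) :
    ∀ T : ℕ, 0 ≤ ∑ k ∈ Finset.range (T + 1),
      ρ ^ (-(2 * (k : ℤ))) *
        ⟪u k, y k - (γ * ρ ^ (2 * ℓ)) • (if ℓ ≤ k then y (k - ℓ) else 0)⟫ := by
  intro T
  obtain ⟨hρ0, hρ1⟩ := hρ
  obtain ⟨hγ0, hγ1⟩ := hγ
  have hc0 : 0 ≤ γ * ρ ^ (2 * ℓ) := mul_nonneg hγ0.le (pow_nonneg hρ0.le _)
  have hc1 : γ * ρ ^ (2 * ℓ) ≤ 1 :=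
    mul_le_one₀ hγ1 (pow_nonneg hρ0.le _) (pow_le_one₀ hρ0.le hρ1)
  refine (sum_range_sub_delay_nonneg (f := fun k ↦ ρ ^ (-(2 * (k : ℤ))) * g (y k))
    (fun k ↦ mul_nonneg (zpow_nonneg hρ0.le _) (hnonneg _)) hγ1 ℓ (T + 1)).trans
    (sum_le_sum fun k _ ↦ ?_)
  have hweighted := mul_le_mul_of_nonneg_left
    (hconv.sub_mul_le_inner_gradient hg0 (hdiff (y k)) hc0 hc1 (if ℓ ≤ k then y (k - ℓ) else 0))
    (zpow_nonneg hρ0.le (-(2 * (k : ℤ))))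
  rw [← hu] at hweighted
  refine le_of_eq_of_le ?_ hweighted
  by_cases h : ℓ ≤ k
  · simp only [h, if_true]
    linear_combination γ * g (y (k - ℓ)) * zpow_neg_two_mul_mul_pow hρ0.ne' h
  · simp only [h, if_false, hg0]
    ring

/-- Off-by-ℓ Zames–Falb ρ-hard IQC (proof of Theorem 18): for a monotone gradient
nonlinearity `∇g` of an admissible potential `g`. -/
theorem stmt_7 {n : ℕ} (g : EuclideanSpace ℝ (Fin n) → ℝ)
    (hconv : ConvexOn ℝ Set.univ g) (hdiff : Differentiable ℝ g)
    (hnonneg : ∀ x, 0 ≤ g x) (hg0 : g 0 = 0)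
    (ρ : ℝ) (hρ : ρ ∈ Set.Ioc (0 : ℝ) 1) (γ : ℝ) (hγ : γ ∈ Set.Ioc (0 : ℝ) 1)
    (ℓ : ℕ) (hℓ : 1 ≤ ℓ)
    (y : ℕ → EuclideanSpace ℝ (Fin n)) (u : ℕ → EuclideanSpace ℝ (Fin n))
    (hu : ∀ k, u k = gradient g (y k)) :
    ∀ T : ℕ, 0 ≤ ∑ k ∈ Finset.range (T + 1),
      ρ ^ (-(2 * (k : ℤ))) *
        ⟪u k, y k - (γ * ρ ^ (2 * ℓ)) • (if ℓ ≤ k then y (k - ℓ) else 0)⟫ :=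
  stmt_7_general g hconv hdiff hnonneg hg0 ρ hρ γ hγ ℓ y u hu
end

section
/- Off-by-ℓ Zames–Falb ρ-hard IQC, odd case. Let n ∈ ℕ and let g : ℝⁿ → ℝ be an admissible potential with gradient ∇g, and assume additionally that g is even, i.e. g(−x) = g(x) for all x (so that ∇g is odd). Let ρ ∈ (0,1], γ ∈ (0,1], and ℓ ≥ 1 a natural number. Let y : ℕ → ℝⁿ be any sequence and set u_k = ∇g(y_k), adopting the convention y_j = 0 for j < 0. Then for every T ∈ ℕ: ∑_{k=0}^{T} ρ^{−2k} ⟨u_k, y_k + γ·ρ^{2ℓ}·y_{k−ℓ}⟩ ≥ 0. -/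
/-!
For `u = ∇g(y)`, the first-order convexity inequality compared with `g 0 = 0` gives
`g y ≤ ⟪u, y⟫`, and compared with `g (-z) = g z` gives `g y - g z ≤ ⟪u, y + z⟫`. A convex
combination with weight `c = γ ρ^(2ℓ) ≤ 1` yields `g y - c g z ≤ ⟪u, y + c • z⟫`. After weighting
by `ρ^(-2k)`, the factor `ρ^(2ℓ)` turns the subtracted term into `γ` times the weighted potential
at time `k - ℓ`, so the sum is at least `(1 - γ)` times a sum of nonnegative terms.
-/

open scoped RealInnerProductSpace

theorem ConvexOn.add_fderiv_le {E : Type*} [NormedAddCommGroup E] [NormedSpace ℝ E]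
    {S : Set E} {f : E → ℝ} {f' : E →L[ℝ] ℝ} {x z : E}
    (hf : ConvexOn ℝ S f) (hx : x ∈ S) (hz : z ∈ S) (hf' : HasFDerivAt f f' x) :
    f x + f' (z - x) ≤ f z := by
  set L : ℝ →ᵃ[ℝ] E := AffineMap.lineMap x z
  have hL : HasDerivAt (f ∘ L) (f' (z - x)) 0 := by
    have hf'0 : HasFDerivAt f f' (L 0) := by simpa [L] using hf'
    exact hf'0.comp_hasDerivAt 0 AffineMap.hasDerivAt_lineMap
  have hslope := (hf.comp_affineMap L).le_slope_of_hasDerivAt (x := 0) (y := 1)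
    (by simpa [L]) (by simpa [L]) one_pos hL
  simp only [slope_def_field, L, Function.comp_apply, AffineMap.lineMap_apply_zero,
    AffineMap.lineMap_apply_one, sub_zero, div_one] at hslope
  linarith

section Gradient

variable {E : Type*} [NormedAddCommGroup E] [InnerProductSpace ℝ E] [CompleteSpace E]
  {f : E → ℝ} {f' x z : E}

theorem ConvexOn.add_inner_gradient_le {S : Set E} (hf : ConvexOn ℝ S f) (hx : x ∈ S)
    (hz : z ∈ S) (hf' : HasGradientAt f f' x) : f x + ⟪f', z - x⟫ ≤ f z :=
  hf.add_fderiv_le hx hz hf'.hasFDerivAt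

theorem ConvexOn.le_inner_self_of_hasGradientAt (hf : ConvexOn ℝ Set.univ f) (h0 : f 0 = 0)
    (hf' : HasGradientAt f f' x) : f x ≤ ⟪f', x⟫ := by
  have := hf.add_inner_gradient_le (Set.mem_univ x) (Set.mem_univ 0) hf'
  rw [h0, zero_sub, inner_neg_right] at this
  linarith

theorem ConvexOn.sub_le_inner_add_of_hasGradientAt (hf : ConvexOn ℝ Set.univ f)
    (heven : ∀ x, f (-x) = f x) (hf' : HasGradientAt f f' x) : f x - f z ≤ ⟪f', x + z⟫ := by
  have := hf.add_inner_gradient_le (Set.mem_univ x) (Set.mem_univ (-z)) hf'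
  rw [heven, ← neg_add', inner_neg_right, add_comm z] at this
  linarith

theorem ConvexOn.sub_mul_le_inner_add_smul_of_hasGradientAt (hf : ConvexOn ℝ Set.univ f)
    (h0 : f 0 = 0) (heven : ∀ x, f (-x) = f x) (hf' : HasGradientAt f f' x) {c : ℝ}
    (hc0 : 0 ≤ c) (hc1 : c ≤ 1) : f x - c * f z ≤ ⟪f', x + c • z⟫ := by
  have hself := hf.le_inner_self_of_hasGradientAt h0 hf'
  have hadd := hf.sub_le_inner_add_of_hasGradientAt heven hf' (z := z)
  have hsplit : ⟪f', x + c • z⟫ = (1 - c) * ⟪f', x⟫ + c * ⟪f', x + z⟫ := by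
    simp only [inner_add_right, inner_smul_right]; ring
  rw [hsplit]
  nlinarith [mul_le_mul_of_nonneg_left hself (sub_nonneg.2 hc1),
    mul_le_mul_of_nonneg_left hadd hc0]

end Gradient

open Finset in
theorem sum_range_ite_sub_le {F : ℕ → ℝ} (hF : ∀ j, 0 ≤ F j) (ℓ N : ℕ) :
    ∑ k ∈ range N, (if ℓ ≤ k then F (k - ℓ) else 0) ≤ ∑ k ∈ range N, F k := by
  rw [← sum_filter, show (range N).filter (ℓ ≤ ·) = Ico ℓ N by ext; simp [and_comm],
    sum_Ico_eq_sum_range]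
  simp only [add_tsub_cancel_left]
  exact sum_le_sum_of_subset_of_nonneg (range_subset_range.2 (Nat.sub_le N ℓ))
    fun j _ _ => hF j

open Finset in
theorem sum_range_sub_mul_ite_sub_nonneg {F : ℕ → ℝ} (hF : ∀ j, 0 ≤ F j) {γ : ℝ}
    (hγ0 : 0 ≤ γ) (hγ1 : γ ≤ 1) (ℓ N : ℕ) :
    0 ≤ ∑ k ∈ range N, (F k - γ * if ℓ ≤ k then F (k - ℓ) else 0) := by
  rw [sum_sub_distrib, ← mul_sum]
  have hshift := sum_range_ite_sub_le hF ℓ N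
  have hsum : 0 ≤ ∑ k ∈ range N, F k := sum_nonneg fun k _ => hF k
  nlinarith [mul_le_mul_of_nonneg_left hshift hγ0]

theorem zpow_neg_two_mul_mul_pow_two_mul {ρ : ℝ} (hρ : ρ ≠ 0) {k ℓ : ℕ} (h : ℓ ≤ k) :
    ρ ^ (-(2 * (k : ℤ))) * ρ ^ (2 * ℓ) = ρ ^ (-(2 * ((k - ℓ : ℕ) : ℤ))) := by
  rw [← zpow_natCast, ← zpow_add₀ hρ]
  push_cast [h]
  ring_nf

theorem stmt_8_general {n : ℕ} (g : EuclideanSpace ℝ (Fin n) → ℝ)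
    (hconv : ConvexOn ℝ Set.univ g) (hdiff : Differentiable ℝ g)
    (hnonneg : ∀ x, 0 ≤ g x) (hg0 : g 0 = 0)
    (heven : ∀ x, g (-x) = g x)
    (ρ : ℝ) (hρ : ρ ∈ Set.Ioc (0 : ℝ) 1) (γ : ℝ) (hγ : γ ∈ Set.Ioc (0 : ℝ) 1)
    (ℓ : ℕ)
    (y : ℕ → EuclideanSpace ℝ (Fin n)) (u : ℕ → EuclideanSpace ℝ (Fin n))
    (hu : ∀ k, u k = gradient g (y k)) :
    ∀ T : ℕ, 0 ≤ ∑ k ∈ Finset.range (T + 1),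
      ρ ^ (-(2 * (k : ℤ))) *
        ⟪u k, y k + (γ * ρ ^ (2 * ℓ)) • (if ℓ ≤ k then y (k - ℓ) else 0)⟫ := by
  intro T
  obtain ⟨hρ0, hρ1⟩ := hρ
  obtain ⟨hγ0, hγ1⟩ := hγ
  set F : ℕ → ℝ := fun j => ρ ^ (-(2 * (j : ℤ))) * g (y j)
  have hF : ∀ j, 0 ≤ F j := fun j => mul_nonneg (zpow_nonneg hρ0.le _) (hnonneg _)
  have hc1 : γ * ρ ^ (2 * ℓ) ≤ 1 :=
    mul_le_one₀ hγ1 (pow_nonneg hρ0.le _) (pow_le_one₀ hρ0.le hρ1)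
  have hterm : ∀ k, F k - γ * (if ℓ ≤ k then F (k - ℓ) else 0) ≤
      ρ ^ (-(2 * (k : ℤ))) *
        ⟪u k, y k + (γ * ρ ^ (2 * ℓ)) • (if ℓ ≤ k then y (k - ℓ) else 0)⟫ := by
    intro k
    have hineq := hconv.sub_mul_le_inner_add_smul_of_hasGradientAt hg0 heven
      (hdiff (y k)).hasGradientAt (by positivity) hc1 (z := if ℓ ≤ k then y (k - ℓ) else 0)
    rw [← hu] at hineq
    calc F k - γ * (if ℓ ≤ k then F (k - ℓ) else 0)
        = ρ ^ (-(2 * (k : ℤ))) *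
            (g (y k) - γ * ρ ^ (2 * ℓ) * g (if ℓ ≤ k then y (k - ℓ) else 0)) := by
          split_ifs with hk
          · simp only [F, ← zpow_neg_two_mul_mul_pow_two_mul hρ0.ne' hk]; ring
          · simp only [F, hg0]; ring
      _ ≤ _ := mul_le_mul_of_nonneg_left hineq (zpow_nonneg hρ0.le _)
  exact (sum_range_sub_mul_ite_sub_nonneg hF hγ0.le hγ1 ℓ (T + 1)).trans
    (Finset.sum_le_sum fun k _ => hterm k)

/-- Off-by-ℓ Zames–Falb ρ-hard IQC, odd case (proof of Theorem 18): for an odd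
monotone gradient nonlinearity `∇g` of an even admissible potential `g`. -/
theorem stmt_8 {n : ℕ} (g : EuclideanSpace ℝ (Fin n) → ℝ)
    (hconv : ConvexOn ℝ Set.univ g) (hdiff : Differentiable ℝ g)
    (hnonneg : ∀ x, 0 ≤ g x) (hg0 : g 0 = 0)
    (heven : ∀ x, g (-x) = g x)
    (ρ : ℝ) (hρ : ρ ∈ Set.Ioc (0 : ℝ) 1) (γ : ℝ) (hγ : γ ∈ Set.Ioc (0 : ℝ) 1)
    (ℓ : ℕ) (hℓ : 1 ≤ ℓ)
    (y : ℕ → EuclideanSpace ℝ (Fin n)) (u : ℕ → EuclideanSpace ℝ (Fin n))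
    (hu : ∀ k, u k = gradient g (y k)) :
    ∀ T : ℕ, 0 ≤ ∑ k ∈ Finset.range (T + 1),
      ρ ^ (-(2 * (k : ℤ))) *
        ⟪u k, y k + (γ * ρ ^ (2 * ℓ)) • (if ℓ ≤ k then y (k - ℓ) else 0)⟫ :=
  stmt_8_general g hconv hdiff hnonneg hg0 heven ρ hρ γ hγ ℓ y u hu
end

section
/- Zames–Falb ρ-hard IQC with a general nonnegative filter (Theorem 18, monotone case, time domain). Let n ∈ ℕ and let g : ℝⁿ → ℝ be an admissible potential with gradient ∇g. Let ρ ∈ (0,1] and let h : ℕ → ℝ satisfy h_k ≥ 0 for all k and ∑_{k=0}^{∞} ρ^{−2k} h_k ≤ 1 (the series being summable). Let y : ℕ → ℝⁿ be any sequence and set u_k = ∇g(y_k). Then for every T ∈ ℕ: ∑_{k=0}^{T} ρ^{−2k} ⟨u_k, y_k − ∑_{j=0}^{k} h_j·y_{k−j}⟩ ≥ 0. -/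
/-!
The gradient inequality `g x + ⟪∇g x, z - x⟫ ≤ g z`, applied with `z = y_{k-j}` and, for the
leftover weight `1 - ∑ⱼ hⱼ`, with `z = 0`, bounds the k-th term of the IQC from below by
`g(y_k) - ∑ⱼ hⱼ g(y_{k-j})`. Because `ρ^{-2k}` is multiplicative in `k` and `g ≥ 0`, the weighted
sum of the convolution terms is at most `(∑ⱼ ρ^{-2j} hⱼ) · ∑ₖ ρ^{-2k} g(y_k) ≤ ∑ₖ ρ^{-2k} g(y_k)`.
-/

open scoped RealInnerProductSpace
open Finset Set AffineMap

section Convex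

variable {E : Type*} [NormedAddCommGroup E]

theorem ConvexOn.add_fderiv_sub_le [NormedSpace ℝ E] {g : E → ℝ} (hg : ConvexOn ℝ univ g)
    {x : E} (hx : DifferentiableAt ℝ g x) (z : E) :
    g x + fderiv ℝ g x (z - x) ≤ g z := by
  have hline : ConvexOn ℝ univ (g ∘ lineMap (k := ℝ) x z) := by
    simpa using hg.comp_affineMap (lineMap (k := ℝ) x z)
  have hderiv : HasDerivAt (g ∘ lineMap (k := ℝ) x z) (fderiv ℝ g x (z - x)) 0 :=
    hx.hasFDerivAt.comp_hasDerivAt_of_eq 0 hasDerivAt_lineMap (lineMap_apply_zero x z).symm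
  have hslope := hline.le_slope_of_hasDerivAt (mem_univ 0) (mem_univ 1) one_pos hderiv
  simp only [slope_def_field, Function.comp_apply, lineMap_apply_zero, lineMap_apply_one,
    sub_zero, div_one] at hslope
  linarith

variable [InnerProductSpace ℝ E] [CompleteSpace E]

theorem ConvexOn.sub_sum_mul_le_inner_gradient {ι : Type*} {g : E → ℝ}
    (hg : ConvexOn ℝ univ g) (hg0 : g 0 = 0) {x : E} (hx : DifferentiableAt ℝ g x)
    (s : Finset ι) {w : ι → ℝ} (hw0 : ∀ i ∈ s, 0 ≤ w i) (hw1 : ∑ i ∈ s, w i ≤ 1) (z : ι → E) :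
    g x - ∑ i ∈ s, w i * g (z i) ≤ ⟪gradient g x, x - ∑ i ∈ s, w i • z i⟫ := by
  have hgrad : ∀ z, g x - g z ≤ ⟪gradient g x, x - z⟫ := fun z => by
    have := hg.add_fderiv_sub_le hx z
    rw [← inner_gradient_left, ← neg_sub, inner_neg_right] at this
    linarith
  have hzero : g x ≤ ⟪gradient g x, x⟫ := by simpa [hg0] using hgrad 0
  calc g x - ∑ i ∈ s, w i * g (z i)
      = (1 - ∑ i ∈ s, w i) * g x + ∑ i ∈ s, w i * (g x - g (z i)) := by
        simp only [mul_sub, sum_sub_distrib, ← sum_mul]; ring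
    _ ≤ (1 - ∑ i ∈ s, w i) * ⟪gradient g x, x⟫ + ∑ i ∈ s, w i * ⟪gradient g x, x - z i⟫ :=
        add_le_add (mul_le_mul_of_nonneg_left hzero (sub_nonneg.2 hw1))
          (sum_le_sum fun i hi => mul_le_mul_of_nonneg_left (hgrad (z i)) (hw0 i hi))
    _ = ⟪gradient g x, x - ∑ i ∈ s, w i • z i⟫ := by
        simp only [inner_sub_right, inner_sum, real_inner_smul_right, mul_sub, sum_sub_distrib,
          ← sum_mul]
        ring

end Convex

/-- The multiplicativity of `r` is what lets the weight `r k` split over `k = j + (k - j)`. -/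
theorem sum_range_mul_convolution_le {r h a : ℕ → ℝ} (hr_add : ∀ i j, r (i + j) = r i * r j)
    (hr : ∀ k, 0 ≤ r k) (hh : ∀ k, 0 ≤ h k) (ha : ∀ k, 0 ≤ a k) (N : ℕ) :
    ∑ k ∈ range N, r k * ∑ j ∈ range (k + 1), h j * a (k - j) ≤
      (∑ j ∈ range N, r j * h j) * ∑ k ∈ range N, r k * a k := by
  calc ∑ k ∈ range N, r k * ∑ j ∈ range (k + 1), h j * a (k - j)
      = ∑ k ∈ range N, ∑ j ∈ range (k + 1), (r j * h j) * (r (k - j) * a (k - j)) := by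
        refine sum_congr rfl fun k _ => ?_
        rw [mul_sum]
        refine sum_congr rfl fun j hj => ?_
        rw [← Nat.add_sub_of_le (Nat.lt_succ_iff.1 (mem_range.1 hj)), hr_add,
          Nat.add_sub_cancel_left]
        ring
    _ = ∑ j ∈ range N, ∑ i ∈ range (N - j), (r j * h j) * (r i * a i) :=
        sum_range_diag_flip N fun j i => (r j * h j) * (r i * a i)
    _ ≤ ∑ j ∈ range N, (r j * h j) * ∑ i ∈ range N, r i * a i := by
        refine sum_le_sum fun j _ => ?_
        rw [← mul_sum]
        exact mul_le_mul_of_nonneg_left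
          (sum_le_sum_of_subset_of_nonneg (range_subset_range.2 (Nat.sub_le N j))
            fun i _ _ => mul_nonneg (hr i) (ha i))
          (mul_nonneg (hr j) (hh j))
    _ = (∑ j ∈ range N, r j * h j) * ∑ k ∈ range N, r k * a k := (sum_mul ..).symm

/-- Theorem 18, monotone case (time domain): the Zames–Falb multiplier with a
nonnegative filter `h` satisfying `∑ ρ⁻²ᵏ hₖ ≤ 1` defines a ρ-hard IQC for the
monotone gradient nonlinearity `∇g`. -/
theorem stmt_9 {n : ℕ} (g : EuclideanSpace ℝ (Fin n) → ℝ)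
    (hconv : ConvexOn ℝ Set.univ g) (hdiff : Differentiable ℝ g)
    (hnonneg : ∀ x, 0 ≤ g x) (hg0 : g 0 = 0)
    (ρ : ℝ) (hρ : ρ ∈ Set.Ioc (0 : ℝ) 1)
    (h : ℕ → ℝ) (hpos : ∀ k, 0 ≤ h k)
    (hsum : Summable (fun k : ℕ => ρ ^ (-(2 * (k : ℤ))) * h k))
    (hsum1 : ∑' k : ℕ, ρ ^ (-(2 * (k : ℤ))) * h k ≤ 1)
    (y : ℕ → EuclideanSpace ℝ (Fin n)) (u : ℕ → EuclideanSpace ℝ (Fin n))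
    (hu : ∀ k, u k = gradient g (y k)) :
    ∀ T : ℕ, 0 ≤ ∑ k ∈ Finset.range (T + 1),
      ρ ^ (-(2 * (k : ℤ))) *
        ⟪u k, y k - ∑ j ∈ Finset.range (k + 1), h j • y (k - j)⟫ := by
  intro T
  obtain ⟨hρ0, hρ1⟩ := hρ
  set r : ℕ → ℝ := fun k => ρ ^ (-(2 * (k : ℤ))) with hr
  have hr_add : ∀ i j, r (i + j) = r i * r j := fun i j => by
    simp only [hr, ← zpow_add₀ hρ0.ne']
    push_cast
    ring_nf
  have hr_nonneg : ∀ k, 0 ≤ r k := fun k => (zpow_pos hρ0 _).le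
  have hr_one_le : ∀ k, 1 ≤ r k := fun k => one_le_zpow_of_nonpos₀ hρ0 hρ1 (by omega)
  have hrh : ∀ m, ∑ j ∈ range m, r j * h j ≤ 1 := fun m =>
    (hsum.sum_le_tsum _ fun j _ => mul_nonneg (hr_nonneg j) (hpos j)).trans hsum1
  have hh : ∀ k, ∑ j ∈ range (k + 1), h j ≤ 1 := fun k =>
    (sum_le_sum fun j _ => le_mul_of_one_le_left (hpos j) (hr_one_le j)).trans (hrh _)
  have hterm : ∀ k, g (y k) - ∑ j ∈ range (k + 1), h j * g (y (k - j)) ≤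
      ⟪u k, y k - ∑ j ∈ range (k + 1), h j • y (k - j)⟫ := fun k => by
    rw [hu]
    exact hconv.sub_sum_mul_le_inner_gradient hg0 (hdiff _) _ (fun j _ => hpos j) (hh k) _
  have hconvolution := sum_range_mul_convolution_le hr_add hr_nonneg hpos
    (fun k => hnonneg (y k)) (T + 1)
  set M := ∑ k ∈ range (T + 1), r k * g (y k)
  calc 0 ≤ (1 - ∑ j ∈ range (T + 1), r j * h j) * M :=
        mul_nonneg (sub_nonneg.2 (hrh _))
          (sum_nonneg fun k _ => mul_nonneg (hr_nonneg k) (hnonneg _))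
    _ ≤ ∑ k ∈ range (T + 1), r k * (g (y k) - ∑ j ∈ range (k + 1), h j * g (y (k - j))) := by
        simp only [mul_sub, sum_sub_distrib]
        linarith
    _ ≤ _ := sum_le_sum fun k _ => mul_le_mul_of_nonneg_left (hterm k) (hr_nonneg k)
end

section
/- Zames–Falb ρ-hard IQC with a general signed filter for odd nonlinearities (Theorem 18, odd case, time domain). Let n ∈ ℕ and let g : ℝⁿ → ℝ be an admissible potential with gradient ∇g, and assume additionally that g is even, i.e. g(−x) = g(x) for all x (so that ∇g is odd). Let ρ ∈ (0,1] and let h : ℕ → ℝ satisfy ∑_{k=0}^{∞} ρ^{−2k} |h_k| ≤ 1 (the series being summable). Let y : ℕ → ℝⁿ be any sequence and set u_k = ∇g(y_k). Then for every T ∈ ℕ: ∑_{k=0}^{T} ρ^{−2k} ⟨u_k, y_k − ∑_{j=0}^{k} h_j·y_{k−j}⟩ ≥ 0. -/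
/-!
Write `a_k = ⟪∇g(y_k), y_k⟫ - g(y_k)`, which is `≥ 0` by convexity and `g 0 = 0`. The gradient
inequality at `y_k`, applied at `±y_m` (evenness of `g`), gives `|⟪∇g(y_k), y_m⟫| ≤ a_k + g(y_m)`,
so the `k`-th term is at least `(1 - ∑ⱼ |h_j|) a_k + g(y_k) - ∑ⱼ |h_j| g(y_{k-j})`.
With `q = ρ⁻²` the weights are multiplicative, `q^k = q^j q^(k-j)`, so the weighted filter terms
form the convolution of `q^j |h_j|` with `q^i g(y_i)`; by Young's inequality for `ℓ¹` its sum
is at most `(∑ q^j |h_j|) ∑ q^i g(y_i) ≤ ∑ q^i g(y_i)`.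
-/

open Finset Set
open scoped Gradient RealInnerProductSpace

theorem ConvexOn.apply_add_apply_sub_le_of_hasFDerivAt {E : Type*} [NormedAddCommGroup E]
    [NormedSpace ℝ E] {g : E → ℝ} {g' : E →L[ℝ] ℝ} {x : E} (hg : ConvexOn ℝ univ g)
    (hx : HasFDerivAt g g' x) (z : E) : g x + g' (z - x) ≤ g z := by
  let ℓ : ℝ →ᵃ[ℝ] E := AffineMap.lineMap x z
  have hline : ConvexOn ℝ univ (g ∘ ℓ) := hg.comp_affineMap ℓ
  have hx' : HasFDerivAt g g' (ℓ 0) := by simpa [ℓ] using hx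
  have hderiv : HasDerivAt (g ∘ ℓ) (g' (z - x)) 0 :=
    hx'.comp_hasDerivAt 0 AffineMap.hasDerivAt_lineMap
  have := hline.le_slope_of_hasDerivAt (mem_univ 0) (mem_univ 1) one_pos hderiv
  simpa [ℓ, slope_def_field, le_sub_iff_add_le'] using this

section Gradient

variable {E : Type*} [NormedAddCommGroup E] [InnerProductSpace ℝ E] [CompleteSpace E]
  {g : E → ℝ} {x : E}

theorem ConvexOn.apply_add_inner_gradient_sub_le (hg : ConvexOn ℝ univ g)
    (hx : DifferentiableAt ℝ g x) (z : E) : g x + ⟪∇ g x, z - x⟫ ≤ g z := by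
  simpa using hg.apply_add_apply_sub_le_of_hasFDerivAt hx.hasFDerivAt z

theorem ConvexOn.apply_le_inner_gradient (hg : ConvexOn ℝ univ g)
    (hx : DifferentiableAt ℝ g x) (hg0 : g 0 = 0) : g x ≤ ⟪∇ g x, x⟫ := by
  simpa [hg0] using hg.apply_add_inner_gradient_sub_le hx 0

theorem ConvexOn.abs_inner_gradient_le (hg : ConvexOn ℝ univ g)
    (hx : DifferentiableAt ℝ g x) (heven : ∀ z, g (-z) = g z) (z : E) :
    |⟪∇ g x, z⟫| ≤ ⟪∇ g x, x⟫ - g x + g z := by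
  have hz := hg.apply_add_inner_gradient_sub_le hx z
  have hnz := hg.apply_add_inner_gradient_sub_le hx (-z)
  rw [inner_sub_right] at hz hnz
  rw [inner_neg_right, heven] at hnz
  exact abs_le.mpr ⟨by linarith, by linarith⟩

theorem ConvexOn.le_inner_gradient_sub_sum_smul (hg : ConvexOn ℝ univ g)
    (hx : DifferentiableAt ℝ g x) (heven : ∀ z, g (-z) = g z)
    {ι : Type*} (s : Finset ι) (c : ι → ℝ) (z : ι → E) :
    (1 - ∑ i ∈ s, |c i|) * (⟪∇ g x, x⟫ - g x) + g x - ∑ i ∈ s, |c i| * g (z i)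
      ≤ ⟪∇ g x, x - ∑ i ∈ s, c i • z i⟫ := by
  have hterm : ∀ i ∈ s, c i * ⟪∇ g x, z i⟫ ≤ |c i| * (⟪∇ g x, x⟫ - g x + g (z i)) :=
    fun i _ => calc
      c i * ⟪∇ g x, z i⟫ ≤ |c i| * |⟪∇ g x, z i⟫| := by rw [← abs_mul]; exact le_abs_self _
      _ ≤ |c i| * (⟪∇ g x, x⟫ - g x + g (z i)) :=
        mul_le_mul_of_nonneg_left (hg.abs_inner_gradient_le hx heven (z i)) (abs_nonneg _)
  have hsum := sum_le_sum hterm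
  simp only [mul_add, sum_add_distrib, ← sum_mul] at hsum
  rw [inner_sub_right, inner_sum]
  simp only [real_inner_smul_right]
  linarith

end Gradient

theorem sum_range_sum_range_mul_sub_le_mul_sum {w v : ℕ → ℝ} (hw : ∀ j, 0 ≤ w j)
    (hv : ∀ i, 0 ≤ v i) (N : ℕ) :
    ∑ k ∈ range N, ∑ j ∈ range (k + 1), w j * v (k - j)
      ≤ (∑ j ∈ range N, w j) * ∑ i ∈ range N, v i := by
  rw [sum_range_diag_flip N fun j i => w j * v i, sum_mul]
  gcongr with j
  rw [← mul_sum]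
  exact mul_le_mul_of_nonneg_left
    (sum_le_sum_of_subset_of_nonneg (range_subset_range.mpr (Nat.sub_le N j))
      fun i _ _ => hv i) (hw j)

theorem ConvexOn.sum_pow_mul_inner_gradient_sub_conv_nonneg {E : Type*} [NormedAddCommGroup E]
    [InnerProductSpace ℝ E] [CompleteSpace E] {g : E → ℝ} (hg : ConvexOn ℝ univ g)
    (hdiff : Differentiable ℝ g) (hnonneg : ∀ x, 0 ≤ g x) (hg0 : g 0 = 0)
    (heven : ∀ x, g (-x) = g x) {q : ℝ} (hq : 1 ≤ q) (h : ℕ → ℝ) (y : ℕ → E) (T : ℕ)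
    (hh : ∑ j ∈ range (T + 1), q ^ j * |h j| ≤ 1) :
    0 ≤ ∑ k ∈ range (T + 1), q ^ k * ⟪∇ g (y k), y k - ∑ j ∈ range (k + 1), h j • y (k - j)⟫ := by
  set a : ℕ → ℝ := fun k => ⟪∇ g (y k), y k⟫ - g (y k)
  have hq0 : 0 ≤ q := zero_le_one.trans hq
  have habs_le : ∀ k ≤ T, ∑ j ∈ range (k + 1), |h j| ≤ 1 := fun k hk => calc
    ∑ j ∈ range (k + 1), |h j| ≤ ∑ j ∈ range (k + 1), q ^ j * |h j| :=
      sum_le_sum fun j _ => le_mul_of_one_le_left (abs_nonneg _) (one_le_pow₀ hq)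
    _ ≤ ∑ j ∈ range (T + 1), q ^ j * |h j| :=
      sum_le_sum_of_subset_of_nonneg (range_subset_range.mpr (by omega))
        fun j _ _ => mul_nonneg (pow_nonneg hq0 j) (abs_nonneg _)
    _ ≤ 1 := hh
  have hpointwise : ∀ k ∈ range (T + 1),
      q ^ k * ((1 - ∑ j ∈ range (k + 1), |h j|) * a k)
        + (q ^ k * g (y k) - ∑ j ∈ range (k + 1), q ^ j * |h j| * (q ^ (k - j) * g (y (k - j))))
      ≤ q ^ k * ⟪∇ g (y k), y k - ∑ j ∈ range (k + 1), h j • y (k - j)⟫ := by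
    intro k _
    have hconv : ∑ j ∈ range (k + 1), q ^ j * |h j| * (q ^ (k - j) * g (y (k - j)))
        = q ^ k * ∑ j ∈ range (k + 1), |h j| * g (y (k - j)) := by
      rw [mul_sum]
      refine sum_congr rfl fun j hj => ?_
      rw [← pow_mul_pow_sub q (Nat.le_of_lt_succ (mem_range.mp hj))]
      ring
    rw [hconv, ← mul_sub, ← mul_add]
    exact mul_le_mul_of_nonneg_left
      ((hg.le_inner_gradient_sub_sum_smul (hdiff _) heven _ h _).trans_eq' (by ring))
      (pow_nonneg hq0 k)
  refine le_trans ?_ (sum_le_sum hpointwise)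
  rw [sum_add_distrib, sum_sub_distrib]
  have hfirst : 0 ≤ ∑ k ∈ range (T + 1), q ^ k * ((1 - ∑ j ∈ range (k + 1), |h j|) * a k) :=
    sum_nonneg fun k hk => mul_nonneg (pow_nonneg hq0 k) <| mul_nonneg
      (sub_nonneg.mpr (habs_le k (Nat.le_of_lt_succ (mem_range.mp hk))))
      (sub_nonneg.mpr (hg.apply_le_inner_gradient (hdiff _) hg0))
  have hsecond := sum_range_sum_range_mul_sub_le_mul_sum
    (w := fun j => q ^ j * |h j|) (v := fun i => q ^ i * g (y i))
    (fun j => mul_nonneg (pow_nonneg hq0 j) (abs_nonneg _))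
    (fun i => mul_nonneg (pow_nonneg hq0 i) (hnonneg _)) (T + 1)
  have henergy : 0 ≤ ∑ i ∈ range (T + 1), q ^ i * g (y i) :=
    sum_nonneg fun i _ => mul_nonneg (pow_nonneg hq0 i) (hnonneg _)
  have hyoung := mul_le_of_le_one_left henergy hh
  linarith

theorem zpow_neg_two_mul_natCast (ρ : ℝ) (k : ℕ) : ρ ^ (-(2 * (k : ℤ))) = (ρ ^ 2)⁻¹ ^ k := by
  rw [zpow_neg, zpow_mul, zpow_natCast, zpow_ofNat, inv_pow]

/-- Theorem 18, odd case (time domain): the Zames–Falb multiplier with a general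
signed filter `h` satisfying `∑ ρ⁻²ᵏ |hₖ| ≤ 1` defines a ρ-hard IQC for the odd
monotone gradient nonlinearity `∇g` of an even admissible potential `g`. -/
theorem stmt_10 {n : ℕ} (g : EuclideanSpace ℝ (Fin n) → ℝ)
    (hconv : ConvexOn ℝ Set.univ g) (hdiff : Differentiable ℝ g)
    (hnonneg : ∀ x, 0 ≤ g x) (hg0 : g 0 = 0)
    (heven : ∀ x, g (-x) = g x)
    (ρ : ℝ) (hρ : ρ ∈ Set.Ioc (0 : ℝ) 1)
    (h : ℕ → ℝ)
    (hsum : Summable (fun k : ℕ => ρ ^ (-(2 * (k : ℤ))) * |h k|))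
    (hsum1 : ∑' k : ℕ, ρ ^ (-(2 * (k : ℤ))) * |h k| ≤ 1)
    (y : ℕ → EuclideanSpace ℝ (Fin n)) (u : ℕ → EuclideanSpace ℝ (Fin n))
    (hu : ∀ k, u k = gradient g (y k)) :
    ∀ T : ℕ, 0 ≤ ∑ k ∈ Finset.range (T + 1),
      ρ ^ (-(2 * (k : ℤ))) *
        ⟪u k, y k - ∑ j ∈ Finset.range (k + 1), h j • y (k - j)⟫ := by
  intro T
  have hq : 1 ≤ (ρ ^ 2)⁻¹ := one_le_inv₀ (pow_pos hρ.1 2) |>.mpr (pow_le_one₀ hρ.1.le hρ.2)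
  have hpartial : ∑ j ∈ range (T + 1), (ρ ^ 2)⁻¹ ^ j * |h j| ≤ 1 := by
    simp only [← zpow_neg_two_mul_natCast]
    exact (hsum.sum_le_tsum _ fun k _ => mul_nonneg (zpow_nonneg hρ.1.le _) (abs_nonneg _)).trans
      hsum1
  simpa only [hu, zpow_neg_two_mul_natCast] using
    hconv.sum_pow_mul_inner_gradient_sub_conv_nonneg hdiff hnonneg hg0 heven hq h y T hpartial
end

section
/- Let φ : ℝ → ℝ be monotone nondecreasing and odd, i.e. φ(−x) = −φ(x) for all x. Then for all a, b ∈ ℝ: |φ(a)·b + φ(b)·a| ≤ φ(a)·a + φ(b)·b. -/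
/-- Lemma 24, second part: for a monotone nondecreasing odd `φ`,
`|φ(a)·b + φ(b)·a| ≤ φ(a)·a + φ(b)·b`. -/
theorem stmt_14 (φ : ℝ → ℝ) (hφ : Monotone φ) (hodd : ∀ x, φ (-x) = -φ x) :
    ∀ a b : ℝ, |φ a * b + φ b * a| ≤ φ a * a + φ b * b := by
  have key : ∀ x y : ℝ, 0 ≤ (φ x - φ y) * (x - y) := by
    intro x y
    rcases le_total x y with h | h
    · have := hφ h
      nlinarith
    · have := hφ h
      nlinarith
  intro a b
  rw [abs_le]
  constructor
  · have h1 := key a (-b)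
    rw [hodd b] at h1
    nlinarith
  · have h2 := key a b
    nlinarith
end

section
/- Pointwise ρ-IQC for repeated monotone nonlinearities with diagonally dominant multiplier (Proposition 21). Let n ∈ ℕ, let φ : ℝ → ℝ be monotone nondecreasing with φ(0) = 0, and let Γ ∈ ℝ^{n×n} be symmetric with Γ_{ii} ≥ 0 for all i, Γ_{ij} ≤ 0 for all i ≠ j, and Γ_{ii} ≥ ∑_{j≠i} |Γ_{ij}| for all i (diagonal dominance). Then for every y ∈ ℝⁿ, setting u ∈ ℝⁿ with u_i = φ(y_i) for each i, we have uᵀ Γ y ≥ 0. -/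
/-!
For symmetric `Γ` with row sums `r i`,
`uᵀ Γ y = ∑ i, r i * u i * y i - ½ ∑ i j, Γ i j * (u i - u j) * (y i - y j)`.
Diagonal dominance makes every `r i` nonnegative and the off-diagonal entries are nonpositive,
so both parts are nonnegative as soon as `u i * y i ≥ 0` and `(u i - u j) * (y i - y j) ≥ 0`;
for `u = φ ∘ y` these are the monotonicity of `φ` (against `0` and between coordinates).
-/

open Matrix Finset

lemma Monotone.apply_mul_nonneg_of_map_zero {R : Type*} [Ring R] [LinearOrder R]
    [IsStrictOrderedRing R] {φ : R → R} (hφ : Monotone φ) (hφ0 : φ 0 = 0) (a : R) :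
    0 ≤ φ a * a := by
  simpa [hφ0] using ((monovary_self id).comp_monotone_left hφ).sub_mul_sub_nonneg 0 a

lemma Finset.sum_nonneg_of_sum_erase_abs_le {ι R : Type*} [AddCommGroup R] [LinearOrder R]
    [IsOrderedAddMonoid R] [DecidableEq ι] {s : Finset ι} {f : ι → R} {i : ι} (hi : i ∈ s)
    (hdd : ∑ j ∈ s.erase i, |f j| ≤ f i) : 0 ≤ ∑ j ∈ s, f j := by
  rw [← add_sum_erase s f hi]
  calc 0 ≤ f i - ∑ j ∈ s.erase i, |f j| := sub_nonneg.2 hdd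
    _ ≤ f i - |∑ j ∈ s.erase i, f j| := by gcongr; exact abs_sum_le_sum_abs f _
    _ ≤ f i + ∑ j ∈ s.erase i, f j := by
      rw [sub_eq_add_neg]
      gcongr
      exact neg_abs_le _

namespace Matrix.IsSymm

variable {ι R : Type*} [Fintype ι] {A : Matrix ι ι R}

lemma sum_mul_sub_mul_sub [CommRing R] (hA : A.IsSymm) (u y : ι → R) :
    ∑ i, ∑ j, A i j * ((u i - u j) * (y i - y j)) =
      2 * ∑ i, (∑ j, A i j) * (u i * y i) - 2 * (u ⬝ᵥ A *ᵥ y) := by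
  have transpose_sum (f : ι → ι → R) : ∑ i, ∑ j, A i j * f j i = ∑ i, ∑ j, A i j * f i j := by
    rw [sum_comm]
    simp only [hA.apply]
  have expand (i j : ι) : A i j * ((u i - u j) * (y i - y j)) =
      A i j * (u i * y i) + A i j * (u j * y j) - A i j * (u i * y j) - A i j * (u j * y i) := by
    ring
  have bilinear : u ⬝ᵥ A *ᵥ y = ∑ i, ∑ j, A i j * (u i * y j) := by
    simp only [dotProduct, mulVec, mul_sum]
    exact sum_congr rfl fun i _ => sum_congr rfl fun j _ => by ring
  simp only [expand, sum_add_distrib, sum_sub_distrib, transpose_sum fun i j => u i * y i,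
    transpose_sum fun i j => u i * y j, bilinear, sum_mul]
  ring

lemma dotProduct_mulVec_nonneg_of_monovary [CommRing R] [LinearOrder R] [IsStrictOrderedRing R]
    (hA : A.IsSymm) (hoff : ∀ i j, i ≠ j → A i j ≤ 0) (hrow : ∀ i, 0 ≤ ∑ j, A i j)
    {u y : ι → R} (hmono : Monovary u y) (hsign : ∀ i, 0 ≤ u i * y i) :
    0 ≤ u ⬝ᵥ A *ᵥ y := by
  have cross : ∑ i, ∑ j, A i j * ((u i - u j) * (y i - y j)) ≤ 0 := by
    refine sum_nonpos fun i _ => sum_nonpos fun j _ => ?_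
    obtain rfl | hij := eq_or_ne i j
    · simp
    · exact mul_nonpos_of_nonpos_of_nonneg (hoff i j hij) (hmono.sub_mul_sub_nonneg j i)
  have diag : 0 ≤ ∑ i, (∑ j, A i j) * (u i * y i) :=
    sum_nonneg fun i _ => mul_nonneg (hrow i) (hsign i)
  linarith [hA.sum_mul_sub_mul_sub u y]

end Matrix.IsSymm

theorem stmt_15_general {n : ℕ} (φ : ℝ → ℝ) (hφ : Monotone φ) (hφ0 : φ 0 = 0)
    (Γ : Matrix (Fin n) (Fin n) ℝ) (hΓsymm : Γ.IsSymm)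
    (hoff : ∀ i j, i ≠ j → Γ i j ≤ 0)
    (hdd : ∀ i, ∑ j ∈ Finset.univ.erase i, |Γ i j| ≤ Γ i i) :
    ∀ y : Fin n → ℝ, 0 ≤ (fun i => φ (y i)) ⬝ᵥ (Γ *ᵥ y) := fun y =>
  hΓsymm.dotProduct_mulVec_nonneg_of_monovary hoff
    (fun i => sum_nonneg_of_sum_erase_abs_le (mem_univ i) (hdd i))
    ((monovary_self y).comp_monotone_left hφ) (fun i => hφ.apply_mul_nonneg_of_map_zero hφ0 (y i))

/-- Proposition 21: the repeated monotone nonlinearity satisfies the pointwise IQC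
defined by a symmetric diagonally dominant multiplier `Γ`. -/
theorem stmt_15 {n : ℕ} (φ : ℝ → ℝ) (hφ : Monotone φ) (hφ0 : φ 0 = 0)
    (Γ : Matrix (Fin n) (Fin n) ℝ) (hΓsymm : Γ.IsSymm)
    (hdiag : ∀ i, 0 ≤ Γ i i)
    (hoff : ∀ i j, i ≠ j → Γ i j ≤ 0)
    (hdd : ∀ i, ∑ j ∈ Finset.univ.erase i, |Γ i j| ≤ Γ i i) :
    ∀ y : Fin n → ℝ, 0 ≤ (fun i => φ (y i)) ⬝ᵥ (Γ *ᵥ y) :=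
  stmt_15_general φ hφ hφ0 Γ hΓsymm hoff hdd
end

section
/- (i,j) off-by-ℓ repeated Zames–Falb ρ-hard IQC. Let f : ℝ → ℝ be a scalar admissible potential with derivative φ = f′. Let n ∈ ℕ, let i ≠ j be indices in {1,…,n}, let ρ ∈ (0,1], let ℓ ≥ 1 be a natural number, and let a ≥ 0 be a real constant. Let y : ℕ → ℝⁿ be any sequence with the convention y_m = 0 for m < 0, and set u_k^{(s)} = φ(y_k^{(s)}) for each coordinate s. Define d_k = u_k^{(i)}y_k^{(i)} + u_k^{(j)}y_k^{(j)}, c_k = u_k^{(j)}y_k^{(i)} + u_k^{(i)}y_k^{(j)}, and p_k = u_k^{(j)}y_{k−ℓ}^{(i)} + u_k^{(i)}y_{k−ℓ}^{(j)}. Then for every T ∈ ℕ: ∑_{k=0}^{T} ρ^{−2k} ( a·(d_k − c_k) + d_k − ρ^{2ℓ}·p_k ) ≥ 0. -/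
/-!
Write `E_k = f(y_k^{(i)}) + f(y_k^{(j)})`. At each step, the gradient inequality of the convex
potential `f`, together with `f(0) = 0` and the monotonicity of `φ = f'`, bounds the summand below
by `ρ^{-2k} E_k - ρ^{-2(k-ℓ)} E_{k-ℓ}` (using `ρ^{2ℓ} ≤ 1`). Summing over `k ≤ T`, the delayed
terms form a partial sum of the nonnegative sequence `ρ^{-2k} E_k`, so the total is nonnegative.
-/

open Finset

/-- `delay ℓ y k = y (k - ℓ)`, with the convention `y m = 0` for `m < 0`. -/
def delay {M : Type*} [Zero M] (ℓ : ℕ) (y : ℕ → M) (k : ℕ) : M :=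
  if ℓ ≤ k then y (k - ℓ) else 0

theorem sum_range_delay {M : Type*} [AddCommMonoid M] (ℓ N : ℕ) (y : ℕ → M) :
    ∑ k ∈ range N, delay ℓ y k = ∑ m ∈ range (N - ℓ), y m := by
  have hfilter : {k ∈ range N | ℓ ≤ k} = Ico ℓ N := by
    ext k
    simp [and_comm]
  unfold delay
  rw [← sum_filter, hfilter, sum_Ico_eq_sum_range]
  simp

theorem sum_range_delay_le {M : Type*} [AddCommMonoid M] [PartialOrder M] [IsOrderedAddMonoid M]
    (ℓ N : ℕ) {y : ℕ → M} (hy : ∀ k, 0 ≤ y k) :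
    ∑ k ∈ range N, delay ℓ y k ≤ ∑ k ∈ range N, y k := by
  rw [sum_range_delay]
  exact sum_le_sum_of_subset_of_nonneg (range_subset_range.2 (Nat.sub_le N ℓ))
    fun k _ _ => hy k

theorem zpow_mul_delay {ρ : ℝ} (hρ : ρ ≠ 0) (ℓ k : ℕ) (y : ℕ → ℝ) :
    ρ ^ (-(2 * (k : ℤ))) * (ρ ^ (2 * ℓ) * delay ℓ y k) =
      delay ℓ (fun m => ρ ^ (-(2 * (m : ℤ))) * y m) k := by
  unfold delay
  split_ifs with hk
  · rw [← mul_assoc, ← zpow_natCast, ← zpow_add₀ hρ]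
    push_cast [hk]
    ring_nf
  · simp

namespace ConvexOn

variable {f : ℝ → ℝ}

theorem add_deriv_mul_sub_le {S : Set ℝ} (hf : ConvexOn ℝ S f) {x z : ℝ} (hx : x ∈ S)
    (hz : z ∈ S) (hfx : DifferentiableAt ℝ f x) : f x + deriv f x * (z - x) ≤ f z := by
  rcases lt_trichotomy x z with hxz | rfl | hzx
  · have h := hf.deriv_le_slope hx hz hxz hfx
    rw [slope_def_field, le_div_iff₀ (sub_pos.2 hxz)] at h
    linarith
  · simp
  · have h := hf.slope_le_deriv hz hx hzx hfx
    rw [slope_def_field, div_le_iff₀ (sub_pos.2 hzx)] at h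
    linarith

variable (hf : ConvexOn ℝ Set.univ f) (hd : Differentiable ℝ f)
include hf hd

theorem le_deriv_mul_self (hf0 : f 0 = 0) (x : ℝ) : f x ≤ deriv f x * x := by
  have h := hf.add_deriv_mul_sub_le (Set.mem_univ x) (Set.mem_univ 0) (hd x)
  rw [hf0] at h
  linarith

theorem deriv_sub_mul_sub_nonneg (x z : ℝ) : 0 ≤ (deriv f x - deriv f z) * (x - z) := by
  have hxz := hf.add_deriv_mul_sub_le (Set.mem_univ x) (Set.mem_univ z) (hd x)
  have hzx := hf.add_deriv_mul_sub_le (Set.mem_univ z) (Set.mem_univ x) (hd z)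
  nlinarith

/-- One step of the off-by-`ℓ` Zames–Falb inequality, with `q = ρ^{2ℓ}` and `x', y'` the
delayed values of `x, y`. -/
theorem zamesFalb_step (hf0 : f 0 = 0) {a q : ℝ} (ha : 0 ≤ a) (hq0 : 0 ≤ q) (hq1 : q ≤ 1)
    (x y x' y' : ℝ) :
    f x + f y - q * (f x' + f y') ≤
      a * ((deriv f x * x + deriv f y * y) - (deriv f y * x + deriv f x * y))
        + (deriv f x * x + deriv f y * y) - q * (deriv f y * x' + deriv f x * y') := by
  have hmono : 0 ≤ a * ((deriv f x * x + deriv f y * y) - (deriv f y * x + deriv f x * y)) := by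
    have := hf.deriv_sub_mul_sub_nonneg hd x y
    exact mul_nonneg ha (by linarith)
  have hself : f x + f y ≤ deriv f x * x + deriv f y * y := by
    linarith [hf.le_deriv_mul_self hd hf0 x, hf.le_deriv_mul_self hd hf0 y]
  have hcross : deriv f y * x' + deriv f x * y' - (deriv f x * x + deriv f y * y) ≤
      f x' + f y' - (f x + f y) := by
    linarith [hf.add_deriv_mul_sub_le (Set.mem_univ y) (Set.mem_univ x') (hd y),
      hf.add_deriv_mul_sub_le (Set.mem_univ x) (Set.mem_univ y') (hd x)]
  linarith [mul_le_mul_of_nonneg_left hcross hq0,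
    mul_le_mul_of_nonneg_left hself (sub_nonneg.2 hq1)]

end ConvexOn

theorem stmt_16_general (f : ℝ → ℝ)
    (hconv : ConvexOn ℝ Set.univ f) (hdiff : Differentiable ℝ f)
    (hnonneg : ∀ x, 0 ≤ f x) (hf0 : f 0 = 0)
    (φ : ℝ → ℝ) (hφ : ∀ x, φ x = deriv f x)
    {n : ℕ} (i j : Fin n)
    (ρ : ℝ) (hρ : ρ ∈ Set.Ioc (0 : ℝ) 1)
    (ℓ : ℕ) (a : ℝ) (ha : 0 ≤ a)
    (y : ℕ → Fin n → ℝ) (u : ℕ → Fin n → ℝ)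
    (hu : ∀ k s, u k s = φ (y k s)) :
    ∀ T : ℕ, 0 ≤ ∑ k ∈ Finset.range (T + 1),
      ρ ^ (-(2 * (k : ℤ))) *
        (a * ((u k i * y k i + u k j * y k j) - (u k j * y k i + u k i * y k j))
          + (u k i * y k i + u k j * y k j)
          - ρ ^ (2 * ℓ) * (u k j * (if ℓ ≤ k then y (k - ℓ) i else 0)
              + u k i * (if ℓ ≤ k then y (k - ℓ) j else 0))) := by
  intro T
  obtain rfl : φ = deriv f := funext hφ
  obtain rfl : u = fun k s => deriv f (y k s) := funext fun k => funext (hu k)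
  obtain ⟨hρ0, hρ1⟩ := hρ
  set E : ℕ → ℝ := fun k => ρ ^ (-(2 * (k : ℤ))) * (f (y k i) + f (y k j))
  have hE_nonneg (k : ℕ) : 0 ≤ E k :=
    mul_nonneg (zpow_pos hρ0 _).le (add_nonneg (hnonneg _) (hnonneg _))
  calc (0 : ℝ) ≤ ∑ k ∈ range (T + 1), (E k - delay ℓ E k) := by
        rw [sum_sub_distrib, sub_nonneg]
        exact sum_range_delay_le ℓ (T + 1) hE_nonneg
    _ ≤ _ := by
      refine sum_le_sum fun k _ => ?_
      have hstep := mul_le_mul_of_nonneg_left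
        (hconv.zamesFalb_step hdiff hf0 ha (pow_nonneg hρ0.le (2 * ℓ)) (pow_le_one₀ hρ0.le hρ1)
          (y k i) (y k j) (delay ℓ (y · i) k) (delay ℓ (y · j) k))
        (zpow_pos hρ0 (-(2 * (k : ℤ)))).le
      have hf_delay : f (delay ℓ (y · i) k) + f (delay ℓ (y · j) k) =
          delay ℓ (fun m => f (y m i) + f (y m j)) k := by
        unfold delay
        split_ifs <;> simp [hf0]
      rw [hf_delay, mul_sub, zpow_mul_delay hρ0.ne'] at hstep
      exact hstep

/-- The `(i,j)` off-by-`ℓ` repeated Zames–Falb ρ-hard IQC (Appendix C), with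
`a = |Γ_{ij}|`, for the repeated scalar nonlinearity `φ = f'` of a scalar
admissible potential `f`. -/
theorem stmt_16 (f : ℝ → ℝ)
    (hconv : ConvexOn ℝ Set.univ f) (hdiff : Differentiable ℝ f)
    (hnonneg : ∀ x, 0 ≤ f x) (hf0 : f 0 = 0)
    (φ : ℝ → ℝ) (hφ : ∀ x, φ x = deriv f x)
    {n : ℕ} (i j : Fin n) (hij : i ≠ j)
    (ρ : ℝ) (hρ : ρ ∈ Set.Ioc (0 : ℝ) 1)
    (ℓ : ℕ) (hℓ : 1 ≤ ℓ) (a : ℝ) (ha : 0 ≤ a)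
    (y : ℕ → Fin n → ℝ) (u : ℕ → Fin n → ℝ)
    (hu : ∀ k s, u k s = φ (y k s)) :
    ∀ T : ℕ, 0 ≤ ∑ k ∈ Finset.range (T + 1),
      ρ ^ (-(2 * (k : ℤ))) *
        (a * ((u k i * y k i + u k j * y k j) - (u k j * y k i + u k i * y k j))
          + (u k i * y k i + u k j * y k j)
          - ρ ^ (2 * ℓ) * (u k j * (if ℓ ≤ k then y (k - ℓ) i else 0)
              + u k i * (if ℓ ≤ k then y (k - ℓ) j else 0))) :=
  stmt_16_general f hconv hdiff hnonneg hf0 φ hφ i j ρ hρ ℓ a ha y u hu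
end

section
/- Repeated Zames–Falb ρ-hard IQC with (ρ,H)-diagonally dominant multiplier (Theorem 22, monotone case, time domain). Let f : ℝ → ℝ be a scalar admissible potential with derivative φ = f′. Let n ∈ ℕ, ρ ∈ (0,1], let H : ℕ → ℝ^{n×n} be a sequence of symmetric matrices with nonnegative entries, and let Γ ∈ ℝ^{n×n} be a symmetric matrix that is (ρ,H)-diagonally dominant. Let y : ℕ → ℝⁿ be any sequence and set u_k ∈ ℝⁿ with u_k^{(s)} = φ(y_k^{(s)}) for each coordinate s. Then for every T ∈ ℕ: ∑_{k=0}^{T} ρ^{−2k} · u_kᵀ ( Γ·y_k − ∑_{m=0}^{k} H_m·y_{k−m} ) ≥ 0. -/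
open Matrix

private lemma tri_sum (g : ℕ → ℕ → ℝ) :
    ∀ N : ℕ, ∑ k ∈ Finset.range N, ∑ m ∈ Finset.range (k + 1), g k m
      = ∑ l ∈ Finset.range N, ∑ m ∈ Finset.range (N - l), g (l + m) m := by
  intro N
  induction N with
  | zero => simp
  | succ N ih =>
    have h1 : ∀ l ∈ Finset.range N,
        ∑ m ∈ Finset.range (N + 1 - l), g (l + m) m
          = ∑ m ∈ Finset.range (N - l), g (l + m) m + g N (N - l) := by
      intro l hl
      have hlN : l < N := Finset.mem_range.mp hl
      rw [show N + 1 - l = (N - l) + 1 by omega, Finset.sum_range_succ,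
        show l + (N - l) = N by omega]
    have h2 : ∑ l ∈ Finset.range N, g N (N - l) = ∑ l ∈ Finset.range N, g N (l + 1) := by
      rw [← Finset.sum_range_reflect]
      refine Finset.sum_congr rfl fun l hl => ?_
      have : l < N := Finset.mem_range.mp hl
      congr 1
      omega
    have hr : ∑ l ∈ Finset.range (N + 1), ∑ m ∈ Finset.range (N + 1 - l), g (l + m) m
        = (∑ l ∈ Finset.range N, ∑ m ∈ Finset.range (N - l), g (l + m) m)
          + ∑ m ∈ Finset.range (N + 1), g N m := by
      rw [Finset.sum_range_succ, Finset.sum_congr rfl h1, Finset.sum_add_distrib, h2,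
        show N + 1 - N = 1 by omega, Finset.sum_range_one,
        Finset.sum_range_succ' (fun m => g N m) N]
      simp only [Nat.add_zero]
      ring
    rw [Finset.sum_range_succ, ih, hr]

private lemma grad_ineq (f : ℝ → ℝ) (hconv : ConvexOn ℝ Set.univ f)
    (hdiff : Differentiable ℝ f) (a b : ℝ) :
    deriv f a * (b - a) ≤ f b - f a := by
  rcases lt_trichotomy a b with h | h | h
  · have hs := hconv.deriv_le_slope (Set.mem_univ a) (Set.mem_univ b) h (hdiff a)
    rw [slope_def_field] at hs
    have hba : 0 < b - a := by linarith
    calc deriv f a * (b - a) ≤ (f b - f a) / (b - a) * (b - a) := by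
          exact mul_le_mul_of_nonneg_right hs hba.le
      _ = f b - f a := div_mul_cancel₀ _ hba.ne'
  · simp [h]
  · have hs := hconv.slope_le_deriv (Set.mem_univ b) (Set.mem_univ a) h (hdiff a)
    rw [slope_def_field] at hs
    have hab : 0 < a - b := by linarith
    have := mul_le_mul_of_nonneg_right hs hab.le
    rw [div_mul_cancel₀ _ hab.ne'] at this
    nlinarith

/-- Theorem 22, monotone ([0,∞] sector) case, time domain: the repeated gradient
nonlinearity `Δ(y) = (φ(y₁),…,φ(yₙ))`, `φ = f'` for a scalar admissible potential
`f`, satisfies the ρ-hard IQC defined by a `(ρ,H)`-diagonally dominant `Γ`. -/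
theorem stmt_17 (f : ℝ → ℝ)
    (hconv : ConvexOn ℝ Set.univ f) (hdiff : Differentiable ℝ f)
    (hnonneg : ∀ x, 0 ≤ f x) (hf0 : f 0 = 0)
    (φ : ℝ → ℝ) (hφ : ∀ x, φ x = deriv f x)
    {n : ℕ} (ρ : ℝ) (hρ : ρ ∈ Set.Ioc (0 : ℝ) 1)
    (H : ℕ → Matrix (Fin n) (Fin n) ℝ)
    (hHsymm : ∀ k, (H k).IsSymm)
    (hHpos : ∀ k i j, 0 ≤ H k i j)
    (hHsum : ∀ i j, Summable (fun k : ℕ => ρ ^ (-(2 * (k : ℤ))) * H k i j))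
    (hHsum1 : ∀ i j, ∑' k : ℕ, ρ ^ (-(2 * (k : ℤ))) * H k i j ≤ 1)
    (Γ : Matrix (Fin n) (Fin n) ℝ) (hΓsymm : Γ.IsSymm)
    (hΓdiag : ∀ i, 0 ≤ Γ i i)
    (hΓoff : ∀ i j, i ≠ j → Γ i j ≤ 0)
    (hΓdd : ∀ i, ∑ j ∈ Finset.univ.erase i, |Γ i j|
        + ∑ j, ∑' k : ℕ, ρ ^ (-(2 * (k : ℤ))) * H k i j ≤ Γ i i)
    (y : ℕ → Fin n → ℝ) (u : ℕ → Fin n → ℝ)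
    (hu : ∀ k s, u k s = φ (y k s)) :
    ∀ T : ℕ, 0 ≤ ∑ k ∈ Finset.range (T + 1),
      ρ ^ (-(2 * (k : ℤ))) *
        (u k ⬝ᵥ (Γ *ᵥ y k - ∑ m ∈ Finset.range (k + 1), H m *ᵥ y (k - m))) := by
  intro T
  obtain ⟨hρ0, hρ1⟩ := hρ
  have hρne : ρ ≠ 0 := ne_of_gt hρ0
  -- abbreviate the weight
  set P : ℕ → ℝ := fun k => ρ ^ (-(2 * (k : ℤ))) with hPdef
  have hP : ∀ k : ℕ, P k = ρ ^ (-(2 * (k : ℤ))) := fun k => rfl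
  have hPnat : ∀ k : ℕ, P k = (ρ ^ (2 * k))⁻¹ := by
    intro k
    rw [hP, show -(2 * (k : ℤ)) = -((2 * k : ℕ) : ℤ) by push_cast; ring, _root_.zpow_neg,
      zpow_natCast]
  have hPpos : ∀ k, 0 < P k := fun k => zpow_pos hρ0 _
  have hPone : ∀ k, 1 ≤ P k := by
    intro k
    rw [hPnat]
    have h1 : ρ ^ (2 * k) ≤ 1 := pow_le_one₀ hρ0.le hρ1
    have h2 : (0 : ℝ) < ρ ^ (2 * k) := pow_pos hρ0 _
    exact (one_le_inv₀ h2).mpr h1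
  have hPmul : ∀ k m, P (k + m) = P k * P m := by
    intro k m
    rw [hPnat, hPnat, hPnat, ← mul_inv, ← pow_add]
    congr 1
    ring
  -- scalar convexity facts
  have hgrad : ∀ a b : ℝ, φ a * (b - a) ≤ f b - f a := by
    intro a b; rw [hφ]; exact grad_ineq f hconv hdiff a b
  have hUF : ∀ k i, f (y k i) ≤ u k i * y k i := by
    intro k i
    have h := hgrad (y k i) 0
    rw [hf0] at h
    rw [hu k i]
    nlinarith [h]
  have hF0 : ∀ k i, 0 ≤ f (y k i) := fun k i => hnonneg _
  have hU0 : ∀ k i, 0 ≤ u k i * y k i := fun k i => le_trans (hF0 k i) (hUF k i)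
  have hpair : ∀ k i j, u k i * y k j + u k j * y k i ≤ u k i * y k i + u k j * y k j := by
    intro k i j
    have h1 := hgrad (y k i) (y k j)
    have h2 := hgrad (y k j) (y k i)
    rw [hu k i, hu k j]
    nlinarith [h1, h2]
  have hconvb : ∀ k m i j, u k i * y m j ≤ f (y m j) - f (y k i) + u k i * y k i := by
    intro k m i j
    have h := hgrad (y k i) (y m j)
    rw [hu k i]
    nlinarith [h]
  -- facts about the tsum `h i j`
  have hhsymm : ∀ i j, (∑' m : ℕ, P m * H m i j) = ∑' m : ℕ, P m * H m j i :=
    fun i j => tsum_congr fun m => by rw [(hHsymm m).apply j i]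
  have hpartial : ∀ (i j) (K : ℕ),
      ∑ m ∈ Finset.range K, P m * H m i j ≤ ∑' m : ℕ, P m * H m i j := by
    intro i j K
    exact Summable.sum_le_tsum _ (fun m _ => mul_nonneg (hPpos m).le (hHpos m i j)) (hHsum i j)
  have hHle : ∀ (i j) (K : ℕ),
      ∑ m ∈ Finset.range K, H m i j ≤ ∑' m : ℕ, P m * H m i j := by
    intro i j K
    refine le_trans (Finset.sum_le_sum fun m _ => ?_) (hpartial i j K)
    exact le_mul_of_one_le_left (hHpos m i j) (hPone m)
  have hΓdd' : ∀ i, ∑ j ∈ Finset.univ.erase i, |Γ i j|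
      + ∑ j, ∑' m : ℕ, P m * H m i j ≤ Γ i i := hΓdd
  -- the key per-step lower bound
  have key : ∀ k : ℕ,
      (∑ i, (∑ j, ∑' m : ℕ, P m * H m i j) * f (y k i))
        - ∑ m ∈ Finset.range (k + 1), ∑ i, ∑ j, H m i j * f (y (k - m) j)
      ≤ u k ⬝ᵥ (Γ *ᵥ y k - ∑ m ∈ Finset.range (k + 1), H m *ᵥ y (k - m)) := by
    intro k
    -- expand the quadratic form
    have expand : u k ⬝ᵥ (Γ *ᵥ y k - ∑ m ∈ Finset.range (k + 1), H m *ᵥ y (k - m))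
        = (∑ i, ∑ j, Γ i j * (u k i * y k j))
          - ∑ m ∈ Finset.range (k + 1), ∑ i, ∑ j, H m i j * (u k i * y (k - m) j) := by
      simp only [dotProduct, Pi.sub_apply, Matrix.mulVec, Finset.sum_apply, mul_sub,
        Finset.sum_sub_distrib, Finset.mul_sum]
      congr 1
      · exact Finset.sum_congr rfl fun i _ => Finset.sum_congr rfl fun j _ => by ring
      · rw [Finset.sum_comm]
        exact Finset.sum_congr rfl fun m _ => Finset.sum_congr rfl fun i _ =>
          Finset.sum_congr rfl fun j _ => by ring
    -- step 1 : lower bound on the Γ part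
    have hswap : (∑ i, ∑ j, Γ i j * (u k i * y k j))
        = ∑ i, ∑ j, Γ i j * (u k j * y k i) := by
      rw [Finset.sum_comm]
      exact Finset.sum_congr rfl fun i _ => Finset.sum_congr rfl fun j _ => by
        rw [hΓsymm.apply i j]
    have h2E : 2 * (∑ i, ∑ j, Γ i j * (u k i * y k j))
        = ∑ i, ∑ j, Γ i j * (u k i * y k j + u k j * y k i) := by
      rw [two_mul]
      nth_rewrite 2 [hswap]
      rw [← Finset.sum_add_distrib]
      exact Finset.sum_congr rfl fun i _ => by
        rw [← Finset.sum_add_distrib]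
        exact Finset.sum_congr rfl fun j _ => by ring
    have h3 : ∑ i, ∑ j, Γ i j * (u k i * y k i + u k j * y k j)
        ≤ ∑ i, ∑ j, Γ i j * (u k i * y k j + u k j * y k i) := by
      refine Finset.sum_le_sum fun i _ => Finset.sum_le_sum fun j _ => ?_
      rcases eq_or_ne i j with rfl | hij
      · exact le_rfl
      · exact mul_le_mul_of_nonpos_left (hpair k i j) (hΓoff i j hij)
    have hswapU : (∑ i, ∑ j, Γ i j * (u k j * y k j))
        = ∑ i, ∑ j, Γ i j * (u k i * y k i) := by
      rw [Finset.sum_comm]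
      exact Finset.sum_congr rfl fun i _ => Finset.sum_congr rfl fun j _ => by
        rw [hΓsymm.apply i j]
    have h4 : ∑ i, ∑ j, Γ i j * (u k i * y k i + u k j * y k j)
        = 2 * ∑ i, (∑ j, Γ i j) * (u k i * y k i) := by
      have e1 : ∑ i, ∑ j, Γ i j * (u k i * y k i + u k j * y k j)
          = (∑ i, ∑ j, Γ i j * (u k i * y k i))
            + ∑ i, ∑ j, Γ i j * (u k j * y k j) := by
        rw [← Finset.sum_add_distrib]
        exact Finset.sum_congr rfl fun i _ => by
          rw [← Finset.sum_add_distrib]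
          exact Finset.sum_congr rfl fun j _ => by ring
      rw [e1, hswapU, two_mul]
      congr 1 <;>
        exact Finset.sum_congr rfl fun i _ => by rw [Finset.sum_mul]
    have h5 : ∑ i, (Γ i i - ∑ j ∈ Finset.univ.erase i, |Γ i j|) * (u k i * y k i)
        ≤ ∑ i, (∑ j, Γ i j) * (u k i * y k i) := by
      refine Finset.sum_le_sum fun i _ => ?_
      refine mul_le_mul_of_nonneg_right ?_ (hU0 k i)
      have e : ∑ j, Γ i j = Γ i i + ∑ j ∈ Finset.univ.erase i, Γ i j :=
        (Finset.add_sum_erase _ _ (Finset.mem_univ i)).symm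
      have hb : - ∑ j ∈ Finset.univ.erase i, |Γ i j| ≤ ∑ j ∈ Finset.univ.erase i, Γ i j := by
        rw [← Finset.sum_neg_distrib]
        exact Finset.sum_le_sum fun j _ => neg_abs_le _
      linarith
    have hE : ∑ i, (Γ i i - ∑ j ∈ Finset.univ.erase i, |Γ i j|) * (u k i * y k i)
        ≤ ∑ i, ∑ j, Γ i j * (u k i * y k j) := by linarith
    -- step 2 : upper bound on the convolution part
    have hC : ∑ m ∈ Finset.range (k + 1), ∑ i, ∑ j, H m i j * (u k i * y (k - m) j)
        ≤ (∑ m ∈ Finset.range (k + 1), ∑ i, ∑ j, H m i j * f (y (k - m) j))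
          + ∑ i, (∑ m ∈ Finset.range (k + 1), ∑ j, H m i j)
              * (u k i * y k i - f (y k i)) := by
      have hstep : ∑ m ∈ Finset.range (k + 1), ∑ i, ∑ j, H m i j * (u k i * y (k - m) j)
          ≤ ∑ m ∈ Finset.range (k + 1), ∑ i, ∑ j,
              H m i j * (f (y (k - m) j) + (u k i * y k i - f (y k i))) := by
        refine Finset.sum_le_sum fun m _ => Finset.sum_le_sum fun i _ =>
          Finset.sum_le_sum fun j _ => ?_
        refine mul_le_mul_of_nonneg_left ?_ (hHpos m i j)
        have := hconvb k (k - m) i j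
        linarith
      refine le_trans hstep (le_of_eq ?_)
      have e1 : ∀ m, ∑ i, ∑ j, H m i j * (f (y (k - m) j) + (u k i * y k i - f (y k i)))
          = (∑ i, ∑ j, H m i j * f (y (k - m) j))
            + ∑ i, (∑ j, H m i j) * (u k i * y k i - f (y k i)) := by
        intro m
        rw [← Finset.sum_add_distrib]
        refine Finset.sum_congr rfl fun i _ => ?_
        rw [Finset.sum_mul, ← Finset.sum_add_distrib]
        exact Finset.sum_congr rfl fun j _ => by ring
      rw [Finset.sum_congr rfl fun m _ => e1 m, Finset.sum_add_distrib]
      congr 1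
      rw [Finset.sum_comm]
      exact Finset.sum_congr rfl fun i _ => by rw [Finset.sum_mul]
    -- step 3 : combine, per coordinate
    have hper : ∑ i, (∑ j, ∑' m : ℕ, P m * H m i j) * f (y k i)
        ≤ (∑ i, (Γ i i - ∑ j ∈ Finset.univ.erase i, |Γ i j|) * (u k i * y k i))
          - ∑ i, (∑ m ∈ Finset.range (k + 1), ∑ j, H m i j)
              * (u k i * y k i - f (y k i)) := by
      rw [← Finset.sum_sub_distrib]
      refine Finset.sum_le_sum fun i _ => ?_
      have hw : ∑ j, ∑' m : ℕ, P m * H m i j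
          ≤ Γ i i - ∑ j ∈ Finset.univ.erase i, |Γ i j| := by
        have := hΓdd' i
        linarith
      have hs : ∑ m ∈ Finset.range (k + 1), ∑ j, H m i j
          ≤ ∑ j, ∑' m : ℕ, P m * H m i j := by
        rw [Finset.sum_comm]
        exact Finset.sum_le_sum fun j _ => hHle i j (k + 1)
      have hUFi := hUF k i
      have hU0i := hU0 k i
      have hF0i := hF0 k i
      nlinarith [mul_le_mul_of_nonneg_right hw hU0i,
        mul_le_mul_of_nonneg_right hs (sub_nonneg.mpr hUFi)]
    rw [expand]
    linarith
  -- assemble: weight by P and sum over k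
  have hmono : ∑ k ∈ Finset.range (T + 1),
        P k * ((∑ i, (∑ j, ∑' m : ℕ, P m * H m i j) * f (y k i))
          - ∑ m ∈ Finset.range (k + 1), ∑ i, ∑ j, H m i j * f (y (k - m) j))
      ≤ ∑ k ∈ Finset.range (T + 1),
        P k * (u k ⬝ᵥ (Γ *ᵥ y k - ∑ m ∈ Finset.range (k + 1), H m *ᵥ y (k - m))) :=
    Finset.sum_le_sum fun k _ => mul_le_mul_of_nonneg_left (key k) (hPpos k).le
  have hsplit : ∑ k ∈ Finset.range (T + 1),
        P k * ((∑ i, (∑ j, ∑' m : ℕ, P m * H m i j) * f (y k i))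
          - ∑ m ∈ Finset.range (k + 1), ∑ i, ∑ j, H m i j * f (y (k - m) j))
      = (∑ k ∈ Finset.range (T + 1),
          P k * ∑ i, (∑ j, ∑' m : ℕ, P m * H m i j) * f (y k i))
        - ∑ k ∈ Finset.range (T + 1),
          ∑ m ∈ Finset.range (k + 1),
            P k * ∑ i, ∑ j, H m i j * f (y (k - m) j) := by
    rw [← Finset.sum_sub_distrib]
    exact Finset.sum_congr rfl fun k _ => by rw [mul_sub, Finset.mul_sum, Finset.mul_sum]
  -- bound the convolution block by the diagonal block
  have hBA : ∑ k ∈ Finset.range (T + 1), ∑ m ∈ Finset.range (k + 1),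
        P k * ∑ i, ∑ j, H m i j * f (y (k - m) j)
      ≤ ∑ k ∈ Finset.range (T + 1),
        P k * ∑ i, (∑ j, ∑' m : ℕ, P m * H m i j) * f (y k i) := by
    rw [tri_sum (fun k m => P k * ∑ i, ∑ j, H m i j * f (y (k - m) j)) (T + 1)]
    refine Finset.sum_le_sum fun l hl => ?_
    -- fix l; bound the inner sum over m
    have e0 : ∀ m, P (l + m) * (∑ i, ∑ j, H m i j * f (y (l + m - m) j))
        = P l * (P m * ∑ i, ∑ j, H m i j * f (y l j)) := by
      intro m
      rw [hPmul, Nat.add_sub_cancel, mul_assoc]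
    rw [Finset.sum_congr rfl fun m _ => e0 m, ← Finset.mul_sum]
    refine mul_le_mul_of_nonneg_left ?_ (hPpos l).le
    -- now : ∑_{m<K} P m * ∑ i ∑ j H m i j f(y l j) ≤ ∑ i (∑ j h i j) f (y l i)
    have e1 : ∑ m ∈ Finset.range (T + 1 - l), P m * ∑ i, ∑ j, H m i j * f (y l j)
        = ∑ i, ∑ j, (∑ m ∈ Finset.range (T + 1 - l), P m * H m i j) * f (y l j) := by
      simp only [Finset.mul_sum]
      rw [Finset.sum_comm]
      refine Finset.sum_congr rfl fun i _ => ?_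
      rw [Finset.sum_comm]
      refine Finset.sum_congr rfl fun j _ => ?_
      rw [Finset.sum_mul]
      exact Finset.sum_congr rfl fun m _ => by ring
    have e2 : ∑ i, ∑ j, (∑ m ∈ Finset.range (T + 1 - l), P m * H m i j) * f (y l j)
        ≤ ∑ i, ∑ j, (∑' m : ℕ, P m * H m i j) * f (y l j) := by
      refine Finset.sum_le_sum fun i _ => Finset.sum_le_sum fun j _ => ?_
      exact mul_le_mul_of_nonneg_right (hpartial i j _) (hF0 l j)
    have e3 : ∑ i, ∑ j, (∑' m : ℕ, P m * H m i j) * f (y l j)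
        = ∑ i, (∑ j, ∑' m : ℕ, P m * H m i j) * f (y l i) := by
      rw [Finset.sum_comm]
      refine Finset.sum_congr rfl fun i _ => ?_
      rw [Finset.sum_mul]
      refine Finset.sum_congr rfl fun j _ => ?_
      rw [← hhsymm i j]
    rw [e1]
    exact le_of_le_of_eq e2 e3
  linarith
end
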